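/- arXiv:1406.6509 — 6 statements merged into one kernel-verified Lean document; each statement's English description precedes it below -/
import Mathlib

section
/- Let μ > 0 and let v be a solution of problem (AP). If v has a double zero, i.e., there exists r* ∈ [0,1] with v(r*) = 0 and v'(r*) = 0, then v ≡ 0 on [0,1]. -/
open Set Filter Topology intervalIntegral

/-- `v` (with derivative `v'`) is a solution of problem (AP) with exponent `p`,
weight `a` and parameter `μ`: `v ∈ C¹[0,1]`, `r ↦ |v'|^{p-2} v'` is differentiable on `(0,1)`
with derivative `-(μ^{p-1}(p-1) r^{p-2} a(r) |v|^{p-2} v)`, and `v'(0) = v(1) = 0`. -/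
def APSol (p μ : ℝ) (a v v' : ℝ → ℝ) : Prop :=
  ContinuousOn v' (Icc 0 1) ∧
  (∀ r ∈ Icc (0:ℝ) 1, HasDerivWithinAt v (v' r) (Icc 0 1) r) ∧
  (∀ r ∈ Ioo (0:ℝ) 1,
    HasDerivAt (fun t => |v' t| ^ (p - 2) * v' t)
      (-(μ ^ (p - 1) * (p - 1) * r ^ (p - 2) * a r * (|v r| ^ (p - 2) * v r))) r) ∧
  v' 0 = 0 ∧ v 1 = 0

/-- The Rayleigh-quotient infimum `η₁(p)`. -/
noncomputable def eta1 (a : ℝ → ℝ) (p : ℝ) : ℝ :=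
  sInf { q : ℝ | ∃ v v' : ℝ → ℝ,
    ContinuousOn v' (Icc 0 1) ∧
    (∀ r ∈ Icc (0:ℝ) 1, HasDerivWithinAt v (v' r) (Icc 0 1) r) ∧
    v' 0 = 0 ∧ v 1 = 0 ∧ (∃ r ∈ Icc (0:ℝ) 1, v r ≠ 0) ∧
    q = (∫ r in (0:ℝ)..1, |v' r| ^ p) /
        ((p - 1) * ∫ r in (0:ℝ)..1, r ^ (p - 2) * a r * |v r| ^ p) }

/-- The principal eigenvalue `μ₁(p) = η₁(p)^{1/(p-1)}`. -/
noncomputable def mu1 (a : ℝ → ℝ) (p : ℝ) : ℝ := eta1 a p ^ (1 / (p - 1))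

/-!
Put `w = |v'|^{p-2} v'` and let `q` be the conjugate exponent of `p`. Then `|v'| = |w|^{q-1}`
and, on `(0,1)`, `|w'| ≤ C |v|^{p-1}` because `r^{p-2} ≤ 1` and `a` is bounded. Young's
inequality `|v|^{p-1} |w|^{q-1} ≤ |v|^p + |w|^q` turns this into `|E'| ≤ K E` for the energy
`E = |v|^p + |w|^q`, so `E e^{K r}` is nondecreasing and `E e^{-K r}` nonincreasing. As `E`
vanishes at the double zero, it vanishes on all of `[0,1]`.
-/

open Real

lemma monotoneOn_mul_exp_of_neg_mul_le_deriv {G : ℝ → ℝ} {a b K : ℝ}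
    (hG : ContinuousOn G (Icc a b))
    (hderiv : ∀ x ∈ Ioo a b, ∃ d, HasDerivAt G d x ∧ -(K * G x) ≤ d) :
    MonotoneOn (fun x => G x * exp (K * x)) (Icc a b) := by
  have hexp : ∀ x, HasDerivAt (fun x => exp (K * x)) (exp (K * x) * K) x := fun x => by
    simpa using ((hasDerivAt_id x).const_mul K).exp
  refine monotoneOn_of_deriv_nonneg (convex_Icc a b)
    (hG.mul (continuous_exp.comp (continuous_const.mul continuous_id)).continuousOn) ?_ ?_
  all_goals rw [interior_Icc]; intro x hx; obtain ⟨d, hd, hle⟩ := hderiv x hx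
  · exact (hd.mul (hexp x)).differentiableAt.differentiableWithinAt
  · have hprod : HasDerivAt (fun y => G y * exp (K * y)) _ x := hd.mul (hexp x)
    rw [hprod.deriv]
    nlinarith [exp_pos (K * x)]

theorem eqOn_zero_of_abs_deriv_le_mul {G : ℝ → ℝ} {a b K x₀ : ℝ}
    (hG : ContinuousOn G (Icc a b)) (hG_nonneg : ∀ x ∈ Icc a b, 0 ≤ G x)
    (hderiv : ∀ x ∈ Ioo a b, ∃ d, HasDerivAt G d x ∧ |d| ≤ K * G x)
    (hx₀ : x₀ ∈ Icc a b) (hGx₀ : G x₀ = 0) :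
    EqOn G 0 (Icc a b) := by
  intro x hx
  refine le_antisymm ?_ (hG_nonneg x hx)
  rcases le_total x x₀ with hle | hle
  · have hmono := monotoneOn_mul_exp_of_neg_mul_le_deriv hG
      (fun y hy => (hderiv y hy).imp fun d hd => ⟨hd.1, neg_le_of_abs_le hd.2⟩) hx hx₀ hle
    simp only [hGx₀, zero_mul] at hmono
    exact nonpos_of_mul_nonpos_left hmono (exp_pos _)
  · -- for `x ≥ x₀`, run the forward estimate on `-G` with rate `-K`
    have hmono := monotoneOn_mul_exp_of_neg_mul_le_deriv (G := fun y => -G y) (K := -K) hG.neg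
      (fun y hy => by
        obtain ⟨d, hd, hbound⟩ := hderiv y hy
        exact ⟨-d, hd.neg, by linarith [le_of_abs_le hbound]⟩)
      hx₀ hx hle
    simp only [hGx₀, neg_zero, zero_mul] at hmono
    exact neg_nonneg.mp (nonneg_of_mul_nonneg_left hmono (exp_pos _))

lemma abs_abs_rpow_sub_two_mul_self {c : ℝ} (hc : 1 < c) (x : ℝ) :
    |(|x| ^ (c - 2) * x)| = |x| ^ (c - 1) := by
  rcases eq_or_ne x 0 with rfl | hx
  · simp [zero_rpow (show c - 1 ≠ 0 by linarith)]
  · rw [abs_mul, abs_of_nonneg (rpow_nonneg (abs_nonneg x) _),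
      show c - 1 = (c - 2) + 1 by ring, rpow_add_one (abs_ne_zero.mpr hx)]

lemma abs_rpow_sub_one_mul_abs_rpow_sub_one_le {p q : ℝ} (hpq : p.HolderConjugate q) (x y : ℝ) :
    |x| ^ (p - 1) * |y| ^ (q - 1) ≤ |x| ^ p + |y| ^ q := by
  have hyoung := young_inequality_of_nonneg (rpow_nonneg (abs_nonneg x) (p - 1))
    (rpow_nonneg (abs_nonneg y) (q - 1)) hpq.symm
  rw [← rpow_mul (abs_nonneg _), ← rpow_mul (abs_nonneg _), hpq.sub_one_mul_conj,
    hpq.symm.sub_one_mul_conj] at hyoung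
  have hx := div_le_self (rpow_nonneg (abs_nonneg x) p) hpq.symm.lt.le
  have hy := div_le_self (rpow_nonneg (abs_nonneg y) q) hpq.lt.le
  linarith

theorem exists_hasDerivAt_energy_abs_le {p q A B r dv dw : ℝ} {v w : ℝ → ℝ}
    (hpq : p.HolderConjugate q) (hA : 0 ≤ A) (hB : 0 ≤ B)
    (hv : HasDerivAt v dv r) (hw : HasDerivAt w dw r)
    (hdv : |dv| ≤ A * |w r| ^ (q - 1)) (hdw : |dw| ≤ B * |v r| ^ (p - 1)) :
    ∃ d, HasDerivAt (fun t => |v t| ^ p + |w t| ^ q) d r ∧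
      |d| ≤ (p * A + q * B) * (|v r| ^ p + |w r| ^ q) := by
  refine ⟨_, ((hasDerivAt_abs_rpow (v r) hpq.lt).comp r hv).add
    ((hasDerivAt_abs_rpow (w r) hpq.symm.lt).comp r hw), ?_⟩
  set X := |v r| ^ (p - 1) * |w r| ^ (q - 1)
  have hp := hpq.pos
  have hq := hpq.symm.pos
  have hvX : |p * |v r| ^ (p - 2) * v r * dv| ≤ p * A * X := by
    rw [mul_assoc p, abs_mul, abs_mul, abs_abs_rpow_sub_two_mul_self hpq.lt, abs_of_pos hp]
    calc p * |v r| ^ (p - 1) * |dv| ≤ p * |v r| ^ (p - 1) * (A * |w r| ^ (q - 1)) := by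
          gcongr
      _ = p * A * X := by ring
  have hwX : |q * |w r| ^ (q - 2) * w r * dw| ≤ q * B * X := by
    rw [mul_assoc q, abs_mul, abs_mul, abs_abs_rpow_sub_two_mul_self hpq.symm.lt, abs_of_pos hq]
    calc q * |w r| ^ (q - 1) * |dw| ≤ q * |w r| ^ (q - 1) * (B * |v r| ^ (p - 1)) := by
          gcongr
      _ = q * B * X := by ring
  calc _ ≤ p * A * X + q * B * X := (abs_add_le _ _).trans (add_le_add hvX hwX)
    _ = (p * A + q * B) * X := by ring
    _ ≤ _ := mul_le_mul_of_nonneg_left (abs_rpow_sub_one_mul_abs_rpow_sub_one_le hpq _ _)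
        (by positivity)

lemma ContinuousOn.abs_rpow_add_abs_rpow {v w : ℝ → ℝ} {s : Set ℝ} {p q : ℝ}
    (hv : ContinuousOn v s) (hw : ContinuousOn w s) (hp : 0 ≤ p) (hq : 0 ≤ q) :
    ContinuousOn (fun t => |v t| ^ p + |w t| ^ q) s :=
  (hv.abs.rpow_const fun _ _ => Or.inr hp).add (hw.abs.rpow_const fun _ _ => Or.inr hq)

lemma abs_eq_abs_abs_rpow_sub_two_mul_self_rpow {p q : ℝ} (hpq : p.HolderConjugate q) (x : ℝ) :
    |x| = |(|x| ^ (p - 2) * x)| ^ (q - 1) := by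
  have hexp : (p - 1) * (q - 1) = 1 := by linear_combination hpq.sub_one_mul_conj
  rw [abs_abs_rpow_sub_two_mul_self hpq.lt, ← rpow_mul (abs_nonneg x), hexp, rpow_one]

lemma abs_ap_rhs_le {p μ M r : ℝ} {a : ℝ → ℝ} (hp : 2 ≤ p) (hr : r ∈ Icc (0:ℝ) 1)
    (haM : |a r| ≤ M) (x : ℝ) :
    |-(μ ^ (p - 1) * (p - 1) * r ^ (p - 2) * a r * (|x| ^ (p - 2) * x))| ≤
      |μ ^ (p - 1) * (p - 1)| * M * |x| ^ (p - 1) := by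
  have hr_pow : |r ^ (p - 2)| ≤ 1 := by
    rw [abs_of_nonneg (rpow_nonneg hr.1 _)]
    exact rpow_le_one hr.1 hr.2 (by linarith)
  rw [abs_neg, abs_mul, abs_mul, abs_mul, abs_abs_rpow_sub_two_mul_self (by linarith)]
  calc _ = |μ ^ (p - 1) * (p - 1)| * (|r ^ (p - 2)| * |a r|) * |x| ^ (p - 1) := by ring
    _ ≤ |μ ^ (p - 1) * (p - 1)| * (1 * M) * |x| ^ (p - 1) := by gcongr
    _ = _ := by ring

theorem stmt1_general (p : ℝ) (hp : 2 ≤ p) (a : ℝ → ℝ)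
    (ha : ContinuousOn a (Icc 0 1))
    (μ : ℝ) (v v' : ℝ → ℝ) (hv : APSol p μ a v v')
    (hdz : ∃ r ∈ Icc (0:ℝ) 1, v r = 0 ∧ v' r = 0) :
    ∀ r ∈ Icc (0:ℝ) 1, v r = 0 := by
  obtain ⟨hv'c, hvd, hwd, -, -⟩ := hv
  obtain ⟨r₀, hr₀, hvr₀, hv'r₀⟩ := hdz
  obtain ⟨M, hM⟩ := isCompact_Icc.exists_bound_of_continuousOn ha
  have hM0 : 0 ≤ M := (norm_nonneg _).trans (hM 0 (by norm_num))
  have hpq := HolderConjugate.conjExponent (show 1 < p by linarith)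
  set q := conjExponent p
  set w : ℝ → ℝ := fun t => |v' t| ^ (p - 2) * v' t
  set G : ℝ → ℝ := fun t => |v t| ^ p + |w t| ^ q
  have hvc : ContinuousOn v (Icc 0 1) := fun t ht => (hvd t ht).continuousWithinAt
  have hwc : ContinuousOn w (Icc 0 1) :=
    (hv'c.abs.rpow_const fun _ _ => Or.inr (by linarith)).mul hv'c
  have hGc : ContinuousOn G (Icc 0 1) := hvc.abs_rpow_add_abs_rpow hwc hpq.pos.le hpq.symm.pos.le
  have hG_nonneg : ∀ t, 0 ≤ G t := fun t => by positivity
  have hGr₀ : G r₀ = 0 := by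
    simp [G, w, hvr₀, hv'r₀, zero_rpow hpq.ne_zero, zero_rpow hpq.symm.ne_zero]
  have hG := eqOn_zero_of_abs_deriv_le_mul hGc (fun t _ => hG_nonneg t)
    (fun r hr => exists_hasDerivAt_energy_abs_le hpq zero_le_one
      (mul_nonneg (abs_nonneg _) hM0)
      ((hvd r (Ioo_subset_Icc_self hr)).hasDerivAt (Icc_mem_nhds hr.1 hr.2)) (hwd r hr)
      (by rw [one_mul, abs_eq_abs_abs_rpow_sub_two_mul_self_rpow hpq])
      (abs_ap_rhs_le hp (Ioo_subset_Icc_self hr) (hM r (Ioo_subset_Icc_self hr)) (v r)))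
    hr₀ hGr₀
  intro r hr
  have hGr : |v r| ^ p + |w r| ^ q = 0 := hG hr
  have hvr : |v r| ^ p = 0 := by
    linarith [rpow_nonneg (abs_nonneg (v r)) p, rpow_nonneg (abs_nonneg (w r)) q]
  exact abs_eq_zero.mp ((rpow_eq_zero (abs_nonneg _) hpq.ne_zero).mp hvr)

theorem stmt1 (p : ℝ) (hp : 2 ≤ p) (a : ℝ → ℝ)
    (ha : ContinuousOn a (Icc 0 1)) (ha0 : ∀ r ∈ Icc (0:ℝ) 1, 0 ≤ a r)
    (hanv : ∀ s t : ℝ, 0 ≤ s → s < t → t ≤ 1 → ∃ r ∈ Ioo s t, a r ≠ 0)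
    (μ : ℝ) (hμ : 0 < μ) (v v' : ℝ → ℝ) (hv : APSol p μ a v v')
    (hdz : ∃ r ∈ Icc (0:ℝ) 1, v r = 0 ∧ v' r = 0) :
    ∀ r ∈ Icc (0:ℝ) 1, v r = 0 :=
  stmt1_general p hp a ha μ v v' hv hdz
end

section
/- If μ > 0 with μ ≠ μ₁(p) and v is a nontrivial solution of problem (AP), then v changes sign: there exist r₁, r₂ ∈ (0,1) with v(r₁) > 0 and v(r₂) < 0. -/
open Set Filter Topology intervalIntegral

/-!
If `v` does not change sign, say `v ≥ 0` (otherwise pass to `-v`), then the flux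
`φ(v') = |v'|^{p-2} v'` is nonincreasing; hence so are `v'` and `v`, and `v > 0` on `[0, 1)`
(strong maximum principle) with `v(s) ≥ v(0) (1 - s)` near `1` (Hopf). Testing the equation
against `v` shows that `μ^{p-1}` is one of the Rayleigh quotients defining `η₁`, while Picone's
identity for `|u|^p / v^{p-1}` shows that it bounds every such quotient from below. Thus
`η₁ = μ^{p-1}`, i.e. `μ = μ₁`.
-/

lemma abs_rpow_sub_two_mul_self_mul_self {p : ℝ} (hp : p ≠ 0) (x : ℝ) :
    |x| ^ (p - 2) * x * x = |x| ^ p := by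
  rcases eq_or_ne x 0 with rfl | hx
  · simp [Real.zero_rpow hp]
  · have hx' : |x| ≠ 0 := abs_ne_zero.2 hx
    rw [mul_assoc, ← abs_mul_abs_self x, ← mul_assoc, ← Real.rpow_add_one hx',
      ← Real.rpow_add_one hx']
    ring_nf

lemma abs_rpow_mul_self_mul (q x y : ℝ) :
    (|x| ^ q * x) * (|y| ^ q * y) = |x * y| ^ q * (x * y) := by
  rw [abs_mul, Real.mul_rpow (abs_nonneg x) (abs_nonneg y)]
  ring

lemma abs_rpow_mul_self_of_nonneg {q : ℝ} (hq : -1 < q) {x : ℝ} (hx : 0 ≤ x) :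
    |x| ^ q * x = x ^ (q + 1) := by
  rcases hx.eq_or_lt with rfl | hx
  · rw [mul_zero, Real.zero_rpow (by linarith)]
  · rw [abs_of_pos hx, Real.rpow_add_one hx.ne']

lemma abs_abs_rpow_mul_self {q : ℝ} (hq : -1 < q) (x : ℝ) : |(|x| ^ q * x)| = |x| ^ (q + 1) := by
  rw [abs_mul, abs_of_nonneg (Real.rpow_nonneg (abs_nonneg x) _),
    ← abs_rpow_mul_self_of_nonneg hq (abs_nonneg x), abs_abs]

lemma strictMono_abs_rpow_mul_self {q : ℝ} (hq : -1 < q) :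
    StrictMono fun x : ℝ => |x| ^ q * x := by
  refine strictMono_of_odd_strictMonoOn_nonneg (fun x => by simp only [abs_neg, mul_neg]) ?_
  refine (Real.strictMonoOn_rpow_Ici_of_exponent_pos (by linarith : 0 < q + 1)).congr ?_
  intro x hx
  exact (abs_rpow_mul_self_of_nonneg hq hx).symm

lemma continuous_abs_rpow_mul_self {q : ℝ} (hq : 0 ≤ q) : Continuous fun x : ℝ => |x| ^ q * x :=
  ((Real.continuous_rpow_const hq).comp continuous_abs).mul continuous_id

/-- The tangent-line inequality for the convex function `|·|^p` at `z`. -/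
lemma mul_abs_rpow_mul_self_mul_le {p : ℝ} (hp : 1 < p) (z y : ℝ) :
    p * (|z| ^ (p - 2) * z) * y ≤ (p - 1) * |z| ^ p + |y| ^ p := by
  have hconj : Real.HolderConjugate (p / (p - 1)) p :=
    ((Real.holderConjugate_iff_eq_conjExponent hp).2 rfl).symm
  have hyoung := Real.young_inequality_of_nonneg (Real.rpow_nonneg (abs_nonneg z) (p - 1))
    (abs_nonneg y) hconj
  rw [← Real.rpow_mul (abs_nonneg z), mul_div_cancel₀ _ (by linarith : p - 1 ≠ 0)] at hyoung
  have hcross : (|z| ^ (p - 2) * z) * y ≤ |z| ^ (p - 1) * |y| := by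
    calc (|z| ^ (p - 2) * z) * y ≤ |(|z| ^ (p - 2) * z) * y| := le_abs_self _
      _ = |z| ^ (p - 1) * |y| := by
        rw [abs_mul, abs_abs_rpow_mul_self (by linarith)]; ring_nf
  have hp0 : 0 < p := by linarith
  calc p * (|z| ^ (p - 2) * z) * y ≤ p * (|z| ^ (p - 1) * |y|) := by
        rw [mul_assoc]; exact mul_le_mul_of_nonneg_left hcross hp0.le
    _ ≤ p * (|z| ^ p / (p / (p - 1)) + |y| ^ p / p) := mul_le_mul_of_nonneg_left hyoung hp0.le
    _ = (p - 1) * |z| ^ p + |y| ^ p := by field_simp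

/-- Pointwise Picone inequality: for `t = u/v`, the left side is `φ(v') · (v |u/v|^p)'`,
where `φ(x) = |x|^{p-2} x` (see `HasDerivAt.mul_abs_div_rpow`). -/
lemma picone_inequality {p : ℝ} (hp : 1 < p) (t y V' : ℝ) :
    (|V'| ^ (p - 2) * V') * (p * (|t| ^ (p - 2) * t) * y - (p - 1) * |t| ^ p * V')
      ≤ |y| ^ p := by
  have hφ := abs_rpow_mul_self_mul (p - 2) t V'
  have hpow := abs_rpow_sub_two_mul_self_mul_self (by linarith : p ≠ 0) V'
  have hmul : |t| ^ p * |V'| ^ p = |t * V'| ^ p := by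
    rw [abs_mul, Real.mul_rpow (abs_nonneg t) (abs_nonneg V')]
  have key := mul_abs_rpow_mul_self_mul_le hp (t * V') y
  calc (|V'| ^ (p - 2) * V') * (p * (|t| ^ (p - 2) * t) * y - (p - 1) * |t| ^ p * V')
      = p * ((|t| ^ (p - 2) * t) * (|V'| ^ (p - 2) * V')) * y
        - (p - 1) * (|t| ^ p * (|V'| ^ (p - 2) * V' * V')) := by ring
    _ = p * (|t * V'| ^ (p - 2) * (t * V')) * y - (p - 1) * |t * V'| ^ p := by
        rw [hφ, hpow, hmul]
    _ ≤ |y| ^ p := by linarith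

lemma HasDerivAt.mul_abs_div_rpow {p : ℝ} (hp : 1 < p) {u v : ℝ → ℝ} {u' v' x : ℝ}
    (hu : HasDerivAt u u' x) (hv : HasDerivAt v v' x) (hx : v x ≠ 0) :
    HasDerivAt (fun t => v t * |u t / v t| ^ p)
      (p * (|u x / v x| ^ (p - 2) * (u x / v x)) * u' - (p - 1) * |u x / v x| ^ p * v') x := by
  have hθ := (hasDerivAt_abs_rpow (u x / v x) hp).comp x (hu.div hv hx)
  refine (hv.mul hθ).congr_deriv ?_
  have hφ := abs_rpow_sub_two_mul_self_mul_self (p := p) (by linarith) (u x / v x)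
  simp only [Function.comp_apply, Pi.div_apply, ← hφ]
  field_simp
  ring

lemma continuousOn_weight {p : ℝ} (hp : 2 ≤ p) {a u : ℝ → ℝ} (ha : ContinuousOn a (Icc 0 1))
    (hu : ContinuousOn u (Icc 0 1)) :
    ContinuousOn (fun r : ℝ => r ^ (p - 2) * a r * |u r| ^ p) (Icc 0 1) :=
  ((Real.continuous_rpow_const (by linarith)).continuousOn.mul ha).mul
    (((Real.continuous_rpow_const (by linarith)).comp continuous_abs).comp_continuousOn hu)

lemma integral_weight_pos {p : ℝ} (hp : 2 ≤ p) {a u : ℝ → ℝ} (ha : ContinuousOn a (Icc 0 1))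
    (ha0 : ∀ r ∈ Icc (0:ℝ) 1, 0 ≤ a r)
    (hanv : ∀ s t : ℝ, 0 ≤ s → s < t → t ≤ 1 → ∃ r ∈ Ioo s t, a r ≠ 0)
    (hu : ContinuousOn u (Icc 0 1)) (hu1 : u 1 = 0) (hnt : ∃ r ∈ Icc (0:ℝ) 1, u r ≠ 0) :
    0 < ∫ r in (0:ℝ)..1, r ^ (p - 2) * a r * |u r| ^ p := by
  obtain ⟨r₀, hr₀, hur₀⟩ := hnt
  have hr₀1 : r₀ < 1 := hr₀.2.lt_of_ne (by rintro rfl; exact hur₀ hu1)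
  have hne : ∀ᶠ r in 𝓝[>] r₀, u r ≠ 0 :=
    ((hu r₀ hr₀).mono_of_mem_nhdsWithin (Icc_mem_nhdsGT_of_mem ⟨hr₀.1, hr₀1⟩)).eventually_ne hur₀
  obtain ⟨t, ht, hsub⟩ := mem_nhdsGT_iff_exists_Ioo_subset.1 hne
  obtain ⟨r, hr, har⟩ := hanv r₀ (min t 1) hr₀.1 (lt_min ht hr₀1) (min_le_right _ _)
  have hr01 : r ∈ Ioo (0:ℝ) 1 := ⟨hr₀.1.trans_lt hr.1, hr.2.trans_le (min_le_right _ _)⟩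
  have hur : u r ≠ 0 := hsub ⟨hr.1, hr.2.trans_le (min_le_left _ _)⟩
  refine intervalIntegral.integral_pos zero_lt_one (continuousOn_weight hp ha hu) ?_ ?_
  · intro x hx
    have := ha0 x (Ioc_subset_Icc_self hx)
    have := hx.1
    positivity
  · refine ⟨r, Ioo_subset_Icc_self hr01, ?_⟩
    have : 0 < a r := (ha0 r (Ioo_subset_Icc_self hr01)).lt_of_ne' har
    have := hr01.1
    have : 0 < |u r| := abs_pos.2 hur
    positivity

lemma abs_le_mul_one_sub {u u' : ℝ → ℝ} {M : ℝ}
    (hu : ∀ r ∈ Icc (0:ℝ) 1, HasDerivWithinAt u (u' r) (Icc 0 1) r)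
    (hM : ∀ r ∈ Icc (0:ℝ) 1, |u' r| ≤ M) (hu1 : u 1 = 0) {s : ℝ} (hs : s ∈ Icc (0:ℝ) 1) :
    |u s| ≤ M * (1 - s) := by
  have hsub : Icc s 1 ⊆ Icc 0 1 := Icc_subset_Icc hs.1 le_rfl
  have h := norm_image_sub_le_of_norm_deriv_le_segment'
    (fun x hx => (hu x (hsub hx)).mono hsub) (fun x hx => hM x (hsub (Ico_subset_Icc_self hx)))
    1 ⟨hs.2, le_rfl⟩
  rwa [hu1, zero_sub, norm_neg, Real.norm_eq_abs] at h

namespace APSol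

variable {p μ : ℝ} {a v v' : ℝ → ℝ}

lemma continuousOn (hv : APSol p μ a v v') : ContinuousOn v (Icc 0 1) :=
  fun r hr => (hv.2.1 r hr).continuousWithinAt

lemma hasDerivAt (hv : APSol p μ a v v') {r : ℝ} (hr : r ∈ Ioo (0:ℝ) 1) :
    HasDerivAt v (v' r) r :=
  (hv.2.1 r (Ioo_subset_Icc_self hr)).hasDerivAt (Icc_mem_nhds hr.1 hr.2)

lemma flux_continuousOn (hp : 2 ≤ p) (hv : APSol p μ a v v') :
    ContinuousOn (fun t => |v' t| ^ (p - 2) * v' t) (Icc 0 1) :=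
  (continuous_abs_rpow_mul_self (by linarith)).comp_continuousOn hv.1

lemma neg (hv : APSol p μ a v v') : APSol p μ a (fun t => -v t) (fun t => -v' t) := by
  obtain ⟨hv'c, hvd, hflux, hv'0, hv1⟩ := hv
  refine ⟨hv'c.neg, fun r hr => (hvd r hr).neg, fun r hr => ?_, by simp [hv'0], by simp [hv1]⟩
  have h := (hflux r hr).neg
  rw [show (-fun t => |v' t| ^ (p - 2) * v' t) = fun t => |-v' t| ^ (p - 2) * -v' t by
    funext t; simp only [Pi.neg_apply, abs_neg, mul_neg]] at h
  exact h.congr_deriv (by simp only [abs_neg, mul_neg])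

/-- Testing the equation against `v` itself. -/
lemma integral_abs_deriv_rpow (hp : 2 ≤ p) (ha : ContinuousOn a (Icc 0 1))
    (hv : APSol p μ a v v') :
    ∫ r in (0:ℝ)..1, |v' r| ^ p
      = μ ^ (p - 1) * ((p - 1) * ∫ r in (0:ℝ)..1, r ^ (p - 2) * a r * |v r| ^ p) := by
  have hp0 : p ≠ 0 := by linarith
  have hderiv : ∀ x ∈ Ioo (0:ℝ) 1, HasDerivAt (fun t => (|v' t| ^ (p - 2) * v' t) * v t)
      (|v' x| ^ p - μ ^ (p - 1) * (p - 1) * (x ^ (p - 2) * a x * |v x| ^ p)) x := by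
    intro x hx
    refine ((hv.2.2.1 x hx).mul (hv.hasDerivAt hx)).congr_deriv ?_
    rw [← abs_rpow_sub_two_mul_self_mul_self hp0 (v' x),
      ← abs_rpow_sub_two_mul_self_mul_self hp0 (v x)]
    ring
  have hint₁ : IntervalIntegrable (fun r => |v' r| ^ p) MeasureTheory.volume 0 1 :=
    (((Real.continuous_rpow_const (by linarith)).comp continuous_abs).comp_continuousOn
      hv.1).intervalIntegrable_of_Icc zero_le_one
  have hint₂ := ((continuousOn_weight hp ha hv.continuousOn).intervalIntegrable_of_Icc
    (μ := MeasureTheory.volume) zero_le_one).const_mul (μ ^ (p - 1) * (p - 1))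
  have hftc := integral_eq_sub_of_hasDeriv_right_of_le zero_le_one
    ((hv.flux_continuousOn hp).mul hv.continuousOn)
    (fun x hx => (hderiv x hx).hasDerivWithinAt) (hint₁.sub hint₂)
  rw [intervalIntegral.integral_sub hint₁ hint₂, intervalIntegral.integral_const_mul] at hftc
  simp only [Pi.mul_apply, hv.2.2.2.1, hv.2.2.2.2, mul_zero] at hftc
  linarith

lemma flux_antitoneOn (hp : 2 ≤ p) (ha0 : ∀ r ∈ Ioo (0:ℝ) 1, 0 ≤ a r) (hμ : 0 ≤ μ)
    (hv : APSol p μ a v v') (hnn : ∀ r ∈ Ioo (0:ℝ) 1, 0 ≤ v r) :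
    AntitoneOn (fun t => |v' t| ^ (p - 2) * v' t) (Icc 0 1) := by
  refine antitoneOn_of_hasDerivWithinAt_nonpos (convex_Icc 0 1) (hv.flux_continuousOn hp)
    (f' := fun x => -(μ ^ (p - 1) * (p - 1) * x ^ (p - 2) * a x * (|v x| ^ (p - 2) * v x)))
    (fun x hx => ?_) (fun x hx => ?_) <;> rw [interior_Icc] at hx
  · rw [interior_Icc]
    exact (hv.2.2.1 x hx).hasDerivWithinAt
  · have := ha0 x hx
    have : 0 ≤ |v x| ^ (p - 2) * v x := mul_nonneg (by positivity) (hnn x hx)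
    have : 0 ≤ p - 1 := by linarith
    have := hx.1
    rw [neg_nonpos]
    positivity

lemma deriv_antitoneOn (hp : 2 ≤ p) (ha0 : ∀ r ∈ Ioo (0:ℝ) 1, 0 ≤ a r) (hμ : 0 ≤ μ)
    (hv : APSol p μ a v v') (hnn : ∀ r ∈ Ioo (0:ℝ) 1, 0 ≤ v r) : AntitoneOn v' (Icc 0 1) :=
  fun _ hs _ ht hst => (strictMono_abs_rpow_mul_self (by linarith)).le_iff_le.1
    (hv.flux_antitoneOn hp ha0 hμ hnn hs ht hst)

lemma antitoneOn (hp : 2 ≤ p) (ha0 : ∀ r ∈ Ioo (0:ℝ) 1, 0 ≤ a r) (hμ : 0 ≤ μ)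
    (hv : APSol p μ a v v') (hnn : ∀ r ∈ Ioo (0:ℝ) 1, 0 ≤ v r) : AntitoneOn v (Icc 0 1) := by
  refine antitoneOn_of_hasDerivWithinAt_nonpos (convex_Icc 0 1) hv.continuousOn (f' := v')
    (fun x hx => ?_) (fun x hx => ?_) <;> rw [interior_Icc] at hx
  · rw [interior_Icc]
    exact (hv.hasDerivAt hx).hasDerivWithinAt
  · rw [← hv.2.2.2.1]
    exact hv.deriv_antitoneOn hp ha0 hμ hnn ⟨le_rfl, zero_le_one⟩ (Ioo_subset_Icc_self hx) hx.1.le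

/-- Strong maximum principle. -/
lemma pos_of_nonneg (hp : 2 ≤ p) (ha0 : ∀ r ∈ Ioo (0:ℝ) 1, 0 ≤ a r) (hμ : 0 ≤ μ)
    (hv : APSol p μ a v v') (hnn : ∀ r ∈ Ioo (0:ℝ) 1, 0 ≤ v r)
    (hnt : ∃ r ∈ Icc (0:ℝ) 1, v r ≠ 0) : ∀ r ∈ Ico (0:ℝ) 1, 0 < v r := by
  have hanti := hv.antitoneOn hp ha0 hμ hnn
  have hanti' := hv.deriv_antitoneOn hp ha0 hμ hnn
  have h0 : (0:ℝ) ∈ Icc (0:ℝ) 1 := ⟨le_rfl, zero_le_one⟩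
  have hnn' : ∀ t ∈ Icc (0:ℝ) 1, 0 ≤ v t := fun t ht =>
    hv.2.2.2.2 ▸ hanti ht ⟨zero_le_one, le_rfl⟩ ht.2
  have hv0 : 0 < v 0 := by
    obtain ⟨r, hr, hvr⟩ := hnt
    exact ((hnn' r hr).lt_of_ne' hvr).trans_le (hanti h0 hr hr.1)
  intro r hr
  by_contra! hvr
  obtain ⟨x₀, hx₀⟩ := exists_between hr.2
  have hx₀' : x₀ ∈ Ioo (0:ℝ) 1 := ⟨hr.1.trans_lt hx₀.1, hx₀.2⟩
  have hzero : ∀ t ∈ Ioo r 1, v t = 0 := fun t ht =>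
    le_antisymm ((hanti ⟨hr.1, hr.2.le⟩ ⟨hr.1.trans ht.1.le, ht.2.le⟩ ht.1.le).trans hvr)
      (hnn' t ⟨hr.1.trans ht.1.le, ht.2.le⟩)
  have hv'x₀ : v' x₀ = 0 := (hv.hasDerivAt hx₀').unique <|
    (hasDerivAt_const x₀ (0:ℝ)).congr_of_eventuallyEq <|
      Filter.eventually_of_mem (Ioo_mem_nhds hx₀.1 hx₀.2) hzero
  obtain ⟨c, hc, hslope⟩ := exists_hasDerivAt_eq_slope v v' hx₀'.1
    (hv.continuousOn.mono (Icc_subset_Icc le_rfl hx₀'.2.le))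
    (fun x hx => hv.hasDerivAt ⟨hx.1, hx.2.trans hx₀'.2⟩)
  -- `v'` is antitone with `v' 0 = v' x₀ = 0`, so it vanishes on `[0, x₀]`
  have hv'c : v' c = 0 := le_antisymm
    (hv.2.2.2.1 ▸ hanti' h0 ⟨hc.1.le, (hc.2.trans hx₀'.2).le⟩ hc.1.le)
    (hv'x₀ ▸ hanti' ⟨hc.1.le, (hc.2.trans hx₀'.2).le⟩ (Ioo_subset_Icc_self hx₀') hc.2.le)
  rw [hv'c, hzero x₀ hx₀, eq_comm, div_eq_zero_iff] at hslope
  rcases hslope with h | h <;> linarith [hx₀'.1]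

/-- Hopf-type boundary estimate. -/
lemma exists_mul_one_sub_le (hp : 2 ≤ p) (ha0 : ∀ r ∈ Ioo (0:ℝ) 1, 0 ≤ a r) (hμ : 0 ≤ μ)
    (hv : APSol p μ a v v') (hnn : ∀ r ∈ Ioo (0:ℝ) 1, 0 ≤ v r) :
    ∃ s₀ ∈ Ioo (0:ℝ) 1, ∀ s ∈ Icc s₀ 1, v 0 * (1 - s) ≤ v s := by
  obtain ⟨s₀, hs₀, hslope⟩ := exists_hasDerivAt_eq_slope v v' zero_lt_one hv.continuousOn
    (fun x hx => hv.hasDerivAt hx)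
  rw [hv.2.2.2.2, sub_zero, div_one, zero_sub] at hslope
  refine ⟨s₀, hs₀, fun s hs => ?_⟩
  have hsub : Icc s₀ 1 ⊆ Icc 0 1 := Icc_subset_Icc hs₀.1.le le_rfl
  have hanti : AntitoneOn (fun t => v t - v 0 * (1 - t)) (Icc s₀ 1) := by
    refine antitoneOn_of_hasDerivWithinAt_nonpos (convex_Icc s₀ 1)
      ((hv.continuousOn.mono hsub).sub (by fun_prop)) (f' := fun t => v' t + v 0)
      (fun x hx => ?_) (fun x hx => ?_) <;> rw [interior_Icc] at hx
    · rw [interior_Icc]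
      have hx' : x ∈ Ioo (0:ℝ) 1 := ⟨hs₀.1.trans hx.1, hx.2⟩
      exact ((hv.hasDerivAt hx').sub (((hasDerivAt_id x).const_sub 1).const_mul (v 0))
        |>.congr_deriv (by ring)).hasDerivWithinAt
    · have := hv.deriv_antitoneOn hp ha0 hμ hnn (Ioo_subset_Icc_self hs₀)
        (hsub (Ioo_subset_Icc_self hx)) hx.1.le
      linarith
  have := hanti hs ⟨hs₀.2.le, le_rfl⟩ hs.2
  simp only [hv.2.2.2.2, sub_self, mul_zero] at this
  linarith

/-- Picone's identity: the derivative of `φ(v') · v |u/v|^p` is at most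
`|u'|^p - μ^{p-1} (p-1) r^{p-2} a |u|^p`. -/
lemma picone_integral_le (hp : 2 ≤ p) (ha : ContinuousOn a (Icc 0 1)) (hv : APSol p μ a v v')
    {u u' : ℝ → ℝ} (hu'c : ContinuousOn u' (Icc 0 1))
    (hu : ∀ r ∈ Icc (0:ℝ) 1, HasDerivWithinAt u (u' r) (Icc 0 1) r) {s : ℝ}
    (hs : s ∈ Icc (0:ℝ) 1) (hvs : ∀ r ∈ Icc 0 s, v r ≠ 0) :
    (|v' s| ^ (p - 2) * v' s) * (v s * |u s / v s| ^ p)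
      + μ ^ (p - 1) * (p - 1) * ∫ r in (0:ℝ)..s, r ^ (p - 2) * a r * |u r| ^ p
      ≤ ∫ r in (0:ℝ)..s, |u' r| ^ p := by
  have hp0 : p ≠ 0 := by linarith
  have hsub : Icc 0 s ⊆ Icc 0 1 := Icc_subset_Icc le_rfl hs.2
  have huc : ContinuousOn u (Icc 0 1) := fun r hr => (hu r hr).continuousWithinAt
  have hcont_abs_rpow : Continuous fun x : ℝ => |x| ^ p :=
    (Real.continuous_rpow_const (by linarith)).comp continuous_abs
  set K := μ ^ (p - 1) * (p - 1)
  have hu'p : ContinuousOn (fun r => |u' r| ^ p) (Icc 0 s) :=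
    hcont_abs_rpow.comp_continuousOn (hu'c.mono hsub)
  have hg : ContinuousOn (fun r => K * (r ^ (p - 2) * a r * |u r| ^ p)) (Icc 0 s) :=
    continuousOn_const.mul ((continuousOn_weight hp ha huc).mono hsub)
  have hθ : ContinuousOn (fun t => v t * |u t / v t| ^ p) (Icc 0 s) :=
    (hv.continuousOn.mono hsub).mul
      (hcont_abs_rpow.comp_continuousOn ((huc.mono hsub).div (hv.continuousOn.mono hsub) hvs))
  have hderiv : ∀ x ∈ Ioo 0 s, HasDerivAt
      (fun t => (|v' t| ^ (p - 2) * v' t) * (v t * |u t / v t| ^ p))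
      (-(K * x ^ (p - 2) * a x * (|v x| ^ (p - 2) * v x)) * (v x * |u x / v x| ^ p)
        + (|v' x| ^ (p - 2) * v' x) * (p * (|u x / v x| ^ (p - 2) * (u x / v x)) * u' x
          - (p - 1) * |u x / v x| ^ p * v' x)) x := by
    intro x hx
    have hx1 : x ∈ Ioo (0:ℝ) 1 := ⟨hx.1, hx.2.trans_le hs.2⟩
    exact (hv.2.2.1 x hx1).mul <| HasDerivAt.mul_abs_div_rpow (by linarith)
      ((hu x (Ioo_subset_Icc_self hx1)).hasDerivAt (Icc_mem_nhds hx1.1 hx1.2))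
      (hv.hasDerivAt hx1) (hvs x (Ioo_subset_Icc_self hx))
  have hle := intervalIntegral.sub_le_integral_of_hasDeriv_right_of_le hs.1
    ((hv.flux_continuousOn hp).mono hsub |>.mul hθ) (fun x hx => (hderiv x hx).hasDerivWithinAt)
    (φ := fun r => |u' r| ^ p - K * (r ^ (p - 2) * a r * |u r| ^ p))
    ((hu'p.sub hg).integrableOn_Icc) (fun x hx => ?_)
  · rw [intervalIntegral.integral_sub (hu'p.intervalIntegrable_of_Icc hs.1)
      (hg.intervalIntegrable_of_Icc hs.1), intervalIntegral.integral_const_mul] at hle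
    simp only [Pi.mul_apply, hv.2.2.2.1, abs_zero, mul_zero, zero_mul, sub_zero] at hle
    linarith
  · have hvx := hvs x (Ioo_subset_Icc_self hx)
    have hweight : (|v x| ^ (p - 2) * v x) * (v x * |u x / v x| ^ p) = |u x| ^ p := by
      rw [← mul_assoc, abs_rpow_sub_two_mul_self_mul_self hp0,
        ← Real.mul_rpow (abs_nonneg _) (abs_nonneg _), ← abs_mul, mul_div_cancel₀ _ hvx]
    have hpicone := picone_inequality (p := p) (by linarith) (u x / v x) (u' x) (v' x)
    linear_combination hpicone - K * x ^ (p - 2) * a x * hweight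

lemma picone_boundary_term_le (hp : 2 ≤ p) (ha0 : ∀ r ∈ Ioo (0:ℝ) 1, 0 ≤ a r) (hμ : 0 ≤ μ)
    (hv : APSol p μ a v v') (hpos : ∀ r ∈ Ico (0:ℝ) 1, 0 < v r) {s₀ : ℝ} (hs₀ : 0 ≤ s₀)
    (hlow : ∀ s ∈ Icc s₀ 1, v 0 * (1 - s) ≤ v s) {u u' : ℝ → ℝ} {M : ℝ}
    (hu : ∀ r ∈ Icc (0:ℝ) 1, HasDerivWithinAt u (u' r) (Icc 0 1) r)
    (hM : ∀ r ∈ Icc (0:ℝ) 1, |u' r| ≤ M) (hu1 : u 1 = 0) {s : ℝ} (hs : s ∈ Ico s₀ 1) :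
    -((|v' s| ^ (p - 2) * v' s) * (v s * |u s / v s| ^ p))
      ≤ -(|v' 1| ^ (p - 2) * v' 1) * (M / v 0) ^ p * v s := by
  have hnn : ∀ r ∈ Ioo (0:ℝ) 1, 0 ≤ v r := fun r hr => (hpos r (Ioo_subset_Ico_self hr)).le
  have hs01 : s ∈ Icc (0:ℝ) 1 := ⟨hs₀.trans hs.1, hs.2.le⟩
  have hv0 : 0 < v 0 := hpos 0 ⟨le_rfl, zero_lt_one⟩
  have hvs : 0 < v s := hpos s ⟨hs01.1, hs.2⟩
  have hM0 : 0 ≤ M := (abs_nonneg _).trans (hM 0 ⟨le_rfl, zero_le_one⟩)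
  have hflux := hv.flux_antitoneOn hp ha0 hμ hnn
  have hw1 : |v' 1| ^ (p - 2) * v' 1 ≤ 0 := by
    simpa [hv.2.2.2.1] using hflux ⟨le_rfl, zero_le_one⟩ ⟨zero_le_one, le_rfl⟩ zero_le_one
  have hratio : |u s / v s| ≤ M / v 0 := by
    rw [abs_div, abs_of_pos hvs, div_le_div_iff₀ hvs hv0]
    calc |u s| * v 0 ≤ M * (1 - s) * v 0 :=
          mul_le_mul_of_nonneg_right (abs_le_mul_one_sub hu hM hu1 hs01) hv0.le
      _ ≤ M * v s := by
          rw [mul_assoc, mul_comm (1 - s)]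
          exact mul_le_mul_of_nonneg_left (hlow s (Ico_subset_Icc_self hs)) hM0
  have hθ : v s * |u s / v s| ^ p ≤ (M / v 0) ^ p * v s := by
    rw [mul_comm]
    exact mul_le_mul_of_nonneg_right (Real.rpow_le_rpow (abs_nonneg _) hratio (by linarith))
      hvs.le
  calc -((|v' s| ^ (p - 2) * v' s) * (v s * |u s / v s| ^ p))
      ≤ -(|v' 1| ^ (p - 2) * v' 1) * (v s * |u s / v s| ^ p) := by
        rw [← neg_mul]
        exact mul_le_mul_of_nonneg_right
          (neg_le_neg (hflux hs01 ⟨zero_le_one, le_rfl⟩ hs.2.le)) (by positivity)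
    _ ≤ -(|v' 1| ^ (p - 2) * v' 1) * ((M / v 0) ^ p * v s) :=
        mul_le_mul_of_nonneg_left hθ (neg_nonneg.2 hw1)
    _ = -(|v' 1| ^ (p - 2) * v' 1) * (M / v 0) ^ p * v s := by ring

/-- The boundary term of `picone_integral_le` vanishes as `s → 1`, since `|u s / v s|` stays
bounded by `exists_mul_one_sub_le`. -/
theorem picone (hp : 2 ≤ p) (ha : ContinuousOn a (Icc 0 1)) (ha0 : ∀ r ∈ Ioo (0:ℝ) 1, 0 ≤ a r)
    (hμ : 0 ≤ μ) (hv : APSol p μ a v v') (hpos : ∀ r ∈ Ico (0:ℝ) 1, 0 < v r)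
    {u u' : ℝ → ℝ} (hu'c : ContinuousOn u' (Icc 0 1))
    (hu : ∀ r ∈ Icc (0:ℝ) 1, HasDerivWithinAt u (u' r) (Icc 0 1) r) (hu1 : u 1 = 0) :
    μ ^ (p - 1) * ((p - 1) * ∫ r in (0:ℝ)..1, r ^ (p - 2) * a r * |u r| ^ p)
      ≤ ∫ r in (0:ℝ)..1, |u' r| ^ p := by
  obtain ⟨s₀, hs₀, hlow⟩ := hv.exists_mul_one_sub_le hp ha0 hμ
    (fun r hr => (hpos r (Ioo_subset_Ico_self hr)).le)
  obtain ⟨M, hM⟩ := isCompact_Icc.exists_bound_of_continuousOn hu'c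
  set K := μ ^ (p - 1) * (p - 1)
  set N := ∫ r in (0:ℝ)..1, |u' r| ^ p
  set C := -(|v' 1| ^ (p - 2) * v' 1) * (M / v 0) ^ p
  have hsub : Ioo s₀ 1 ⊆ Icc 0 1 := fun s hs => ⟨hs₀.1.le.trans hs.1.le, hs.2.le⟩
  have hbound : ∀ s ∈ Ioo s₀ 1,
      K * ∫ r in (0:ℝ)..s, r ^ (p - 2) * a r * |u r| ^ p ≤ N + C * v s := by
    intro s hs
    have hprim := hv.picone_integral_le hp ha hu'c hu (hsub hs)
      (fun r hr => (hpos r ⟨hr.1, hr.2.trans_lt hs.2⟩).ne')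
    have hN : ∫ r in (0:ℝ)..s, |u' r| ^ p ≤ N :=
      intervalIntegral.integral_mono_interval le_rfl (hsub hs).1 (hsub hs).2
        (MeasureTheory.ae_of_all _ fun r => by positivity)
        ((((Real.continuous_rpow_const (by linarith)).comp continuous_abs).comp_continuousOn
          hu'c).intervalIntegrable_of_Icc zero_le_one)
    have hboundary := picone_boundary_term_le hp ha0 hμ hv hpos hs₀.1.le hlow hu hM hu1
      (Ioo_subset_Ico_self hs)
    linarith
  have := right_nhdsWithin_Ioo_neBot hs₀.2
  have hprimitive := intervalIntegral.continuousOn_primitive_interval (a := 0) (b := 1)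
    (f := fun r => r ^ (p - 2) * a r * |u r| ^ p) (μ := MeasureTheory.volume)
  rw [uIcc_of_le zero_le_one] at hprimitive
  have hlim_int := (hprimitive (continuousOn_weight hp ha
    (fun r hr => (hu r hr).continuousWithinAt)).integrableOn_Icc 1 ⟨zero_le_one, le_rfl⟩).mono hsub
  have hlim_v : Tendsto v (𝓝[Ioo s₀ 1] 1) (𝓝 0) :=
    hv.2.2.2.2 ▸ (hv.continuousOn 1 ⟨zero_le_one, le_rfl⟩).mono hsub
  have := le_of_tendsto_of_tendsto (hlim_int.const_mul K) ((hlim_v.const_mul C).const_add N)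
    (eventually_mem_nhdsWithin.mono hbound)
  rw [mul_zero, add_zero] at this
  linarith

end APSol

lemma eta1_eq_of_pos_solution {p μ : ℝ} {a v v' : ℝ → ℝ} (hp : 2 ≤ p)
    (ha : ContinuousOn a (Icc 0 1)) (ha0 : ∀ r ∈ Icc (0:ℝ) 1, 0 ≤ a r)
    (hanv : ∀ s t : ℝ, 0 ≤ s → s < t → t ≤ 1 → ∃ r ∈ Ioo s t, a r ≠ 0) (hμ : 0 ≤ μ)
    (hv : APSol p μ a v v') (hpos : ∀ r ∈ Ico (0:ℝ) 1, 0 < v r) :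
    eta1 a p = μ ^ (p - 1) := by
  have hp1 : 0 < p - 1 := by linarith
  have hv0 : v 0 ≠ 0 := (hpos 0 ⟨le_rfl, zero_lt_one⟩).ne'
  refine IsLeast.csInf_eq ⟨⟨v, v', hv.1, hv.2.1, hv.2.2.2.1, hv.2.2.2.2,
    ⟨0, ⟨le_rfl, zero_le_one⟩, hv0⟩, ?_⟩, ?_⟩
  · rw [eq_div_iff (mul_pos hp1 (integral_weight_pos hp ha ha0 hanv hv.continuousOn hv.2.2.2.2
      ⟨0, ⟨le_rfl, zero_le_one⟩, hv0⟩)).ne', hv.integral_abs_deriv_rpow hp ha]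
  · rintro q ⟨u, u', hu'c, hu, -, hu1, hunt, rfl⟩
    rw [le_div_iff₀ (mul_pos hp1 (integral_weight_pos hp ha ha0 hanv
      (fun r hr => (hu r hr).continuousWithinAt) hu1 hunt))]
    exact hv.picone hp ha (fun r hr => ha0 r (Ioo_subset_Icc_self hr)) hμ hpos hu'c hu hu1

lemma mu1_eq_of_nonneg_solution {p μ : ℝ} {a v v' : ℝ → ℝ} (hp : 2 ≤ p)
    (ha : ContinuousOn a (Icc 0 1)) (ha0 : ∀ r ∈ Icc (0:ℝ) 1, 0 ≤ a r)
    (hanv : ∀ s t : ℝ, 0 ≤ s → s < t → t ≤ 1 → ∃ r ∈ Ioo s t, a r ≠ 0) (hμ : 0 ≤ μ)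
    (hv : APSol p μ a v v') (hnn : ∀ r ∈ Ioo (0:ℝ) 1, 0 ≤ v r)
    (hnt : ∃ r ∈ Icc (0:ℝ) 1, v r ≠ 0) :
    mu1 a p = μ := by
  have hpos := hv.pos_of_nonneg hp (fun r hr => ha0 r (Ioo_subset_Icc_self hr)) hμ hnn hnt
  rw [mu1, eta1_eq_of_pos_solution hp ha ha0 hanv hμ hv hpos, one_div,
    Real.rpow_rpow_inv hμ (by linarith)]

theorem stmt3 (p : ℝ) (hp : 2 ≤ p) (a : ℝ → ℝ)
    (ha : ContinuousOn a (Icc 0 1)) (ha0 : ∀ r ∈ Icc (0:ℝ) 1, 0 ≤ a r)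
    (hanv : ∀ s t : ℝ, 0 ≤ s → s < t → t ≤ 1 → ∃ r ∈ Ioo s t, a r ≠ 0)
    (μ : ℝ) (hμ : 0 < μ) (hμne : μ ≠ mu1 a p)
    (v v' : ℝ → ℝ) (hv : APSol p μ a v v')
    (hnt : ∃ r ∈ Icc (0:ℝ) 1, v r ≠ 0) :
    (∃ r₁ ∈ Ioo (0:ℝ) 1, 0 < v r₁) ∧ (∃ r₂ ∈ Ioo (0:ℝ) 1, v r₂ < 0) := by
  have hneg : ∀ {u u' : ℝ → ℝ}, APSol p μ a u u' → (∃ r ∈ Icc (0:ℝ) 1, u r ≠ 0) →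
      ∃ r ∈ Ioo (0:ℝ) 1, u r < 0 := by
    intro u u' hu hunt
    by_contra! hnn
    exact hμne (mu1_eq_of_nonneg_solution hp ha ha0 hanv hμ.le hu hnn hunt).symm
  obtain ⟨r, hr, hvr⟩ := hneg hv.neg (by simpa using hnt)
  exact ⟨⟨r, hr, by linarith⟩, hneg hv hnt⟩
end

section
/- Let g : [0,∞) → [0,∞) be continuous with lim_{s→0⁺} g(s)/s^N = 0, and set F(s) = s^N + g(s). Let λ > 0 and let v ∈ C([0,1],[0,∞)) satisfy v = λ T_F v (such a v is continuously differentiable). If v has a double zero, i.e., there exists r* ∈ [0,1] with v(r*) = 0 and v'(r*) = 0, then v ≡ 0 on [0,1]. -/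
open Set Filter Topology intervalIntegral

/-- The operator `T_F v (r) = ∫_r^1 (∫_0^s N τ^{N-1} a(τ) F(v(τ)) dτ)^{1/N} ds`. -/
noncomputable def TF (N : ℕ) (a F v : ℝ → ℝ) (r : ℝ) : ℝ :=
  ∫ s in r..1, (∫ τ in (0:ℝ)..s, (N : ℝ) * τ ^ (N - 1) * a τ * F (v τ)) ^ ((1:ℝ) / N)

/-- The first eigenvalue `λ₁` of `v = λ T_{s ↦ s^N} v`, given by the Rayleigh quotient. -/
noncomputable def lam1 (N : ℕ) (a : ℝ → ℝ) : ℝ :=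
  (sInf { q : ℝ | ∃ v v' : ℝ → ℝ,
    ContinuousOn v' (Icc 0 1) ∧
    (∀ r ∈ Icc (0:ℝ) 1, HasDerivWithinAt v (v' r) (Icc 0 1) r) ∧
    v' 0 = 0 ∧ v 1 = 0 ∧ (∃ r ∈ Icc (0:ℝ) 1, v r ≠ 0) ∧
    q = (∫ r in (0:ℝ)..1, |v' r| ^ (N + 1)) /
        ((N : ℝ) * ∫ r in (0:ℝ)..1, r ^ (N - 1) * a r * |v r| ^ (N + 1)) }) ^ ((1:ℝ) / N)

theorem stmt7 (N : ℕ) (hN : 1 ≤ N) (a : ℝ → ℝ)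
    (ha : ContinuousOn a (Icc 0 1)) (ha0 : ∀ r ∈ Icc (0:ℝ) 1, 0 ≤ a r)
    (hanv : ∀ s t : ℝ, 0 ≤ s → s < t → t ≤ 1 → ∃ r ∈ Ioo s t, a r ≠ 0)
    (g : ℝ → ℝ) (hg : ContinuousOn g (Ici 0)) (hg0 : ∀ s ≥ (0:ℝ), 0 ≤ g s)
    (hglim : Tendsto (fun s => g s / s ^ N) (nhdsWithin 0 (Ioi 0)) (nhds 0))
    (lam : ℝ) (hlam : 0 < lam) (v : ℝ → ℝ)
    (hvc : ContinuousOn v (Icc 0 1)) (hv0 : ∀ r ∈ Icc (0:ℝ) 1, 0 ≤ v r)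
    (hfix : ∀ r ∈ Icc (0:ℝ) 1, v r = lam * TF N a (fun s => s ^ N + g s) v r)
    (hdz : ∃ r ∈ Icc (0:ℝ) 1, v r = 0 ∧ HasDerivWithinAt v 0 (Icc 0 1) r) :
    ∀ r ∈ Icc (0:ℝ) 1, v r = 0 := by
  obtain ⟨rs, hrs, hvrs, hdrs⟩ := hdz
  have hN0 : (N : ℝ) ≠ 0 := Nat.cast_ne_zero.mpr (by omega)
  have hN0' : (1:ℝ)/N ≠ 0 := by positivity
  set F : ℝ → ℝ := fun s => s ^ N + g s with hFdef
  set h : ℝ → ℝ := fun τ => (N : ℝ) * τ ^ (N - 1) * a τ * F (v τ) with hhdef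
  set w : ℝ → ℝ := fun s => ∫ τ in (0:ℝ)..s, h τ with hwdef
  set u : ℝ → ℝ := fun s => (w s) ^ ((1:ℝ)/N) with hudef
  -- continuity and nonnegativity facts
  have hFc : ContinuousOn (fun τ => F (v τ)) (Icc 0 1) := by
    rw [hFdef]
    exact (hvc.pow N).add (hg.comp hvc fun x hx => hv0 x hx)
  have hF0 : ∀ τ ∈ Icc (0:ℝ) 1, 0 ≤ F (v τ) := fun τ hτ =>
    add_nonneg (pow_nonneg (hv0 τ hτ) N) (hg0 _ (hv0 τ hτ))
  have hhc : ContinuousOn h (Icc 0 1) := by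
    rw [hhdef]
    exact ((continuousOn_const.mul ((continuous_pow (N-1)).continuousOn)).mul ha).mul hFc
  have hh0 : ∀ τ ∈ Icc (0:ℝ) 1, 0 ≤ h τ := by
    intro τ hτ
    exact mul_nonneg (mul_nonneg (mul_nonneg (Nat.cast_nonneg N)
      (pow_nonneg hτ.1 _)) (ha0 τ hτ)) (hF0 τ hτ)
  have hhint : ∀ p q : ℝ, p ∈ Icc (0:ℝ) 1 → q ∈ Icc (0:ℝ) 1 →
      IntervalIntegrable h MeasureTheory.volume p q := fun p q hp hq =>
    (hhc.mono (uIcc_subset_Icc hp hq)).intervalIntegrable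
  have hwmono : ∀ p q : ℝ, p ∈ Icc (0:ℝ) 1 → q ∈ Icc (0:ℝ) 1 → p ≤ q → w p ≤ w q := by
    intro p q hp hq hpq
    have hadd := integral_add_adjacent_intervals (hhint 0 p (by simp) hp) (hhint p q hp hq)
    have hpos : 0 ≤ ∫ τ in p..q, h τ :=
      intervalIntegral.integral_nonneg hpq fun x hx =>
        hh0 x ⟨hp.1.trans hx.1, hx.2.trans hq.2⟩
    rw [hwdef]; simp only
    rw [← hadd]; linarith
  have hw0' : ∀ p ∈ Icc (0:ℝ) 1, 0 ≤ w p := by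
    intro p hp
    have h0 : w 0 = 0 := by rw [hwdef]; simp
    have := hwmono 0 p (by simp) hp hp.1
    linarith
  have hwc : ContinuousOn w (Icc 0 1) := by
    have := intervalIntegral.continuousOn_primitive_interval'
      (μ := MeasureTheory.volume) (f := h) (b₁ := 0) (b₂ := 1)
      (hhint 0 1 (by simp) (by simp [zero_le_one])) (left_mem_uIcc)
    rwa [uIcc_of_le zero_le_one] at this
  have huc : ContinuousOn u (Icc 0 1) := by
    rw [hudef]
    exact hwc.rpow_const fun x hx => Or.inr (by positivity)
  have hu0 : ∀ p ∈ Icc (0:ℝ) 1, 0 ≤ u p := fun p hp => Real.rpow_nonneg (hw0' p hp) _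
  have huint : ∀ p q : ℝ, p ∈ Icc (0:ℝ) 1 → q ∈ Icc (0:ℝ) 1 →
      IntervalIntegrable u MeasureTheory.volume p q := fun p q hp hq =>
    (huc.mono (uIcc_subset_Icc hp hq)).intervalIntegrable
  have hone : (1:ℝ) ∈ Icc (0:ℝ) 1 := by simp [zero_le_one]
  have hfix' : ∀ r ∈ Icc (0:ℝ) 1, v r = lam * ∫ s in r..1, u s := by
    intro r hr
    rw [hfix r hr]
    rfl
  -- the derivative condition gives `w rs = 0`
  haveI : Fact (rs ∈ Icc (0:ℝ) 1) := ⟨hrs⟩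
  have hmeasu : StronglyMeasurableAtFilter u (𝓝[Icc (0:ℝ) 1] rs) :=
    huc.stronglyMeasurableAtFilter_nhdsWithin measurableSet_Icc rs
  have hW1 : HasDerivWithinAt (fun r => ∫ s in r..1, u s) (-(u rs)) (Icc 0 1) rs :=
    intervalIntegral.integral_hasDerivWithinAt_left (huint rs 1 hrs hone) hmeasu (huc rs hrs)
  have hv' : HasDerivWithinAt v (lam * -(u rs)) (Icc 0 1) rs :=
    (hW1.const_mul lam).congr (fun x hx => hfix' x hx) (hfix' rs hrs)
  have heq : lam * -(u rs) = 0 :=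
    UniqueDiffWithinAt.eq_deriv _ (uniqueDiffOn_Icc one_pos rs hrs) hv' hdrs
  have hurs : u rs = 0 := by
    rcases mul_eq_zero.mp heq with h1 | h2
    · exact absurd h1 (ne_of_gt hlam)
    · linarith [neg_eq_zero.mp h2]
  have hwrs : w rs = 0 := (Real.rpow_eq_zero (hw0' rs hrs) hN0').mp hurs
  -- right part: `v = 0` on `[rs, 1]`
  have hright : ∀ r ∈ Icc (0:ℝ) 1, rs ≤ r → v r = 0 := by
    intro r hr hle
    have hadd := integral_add_adjacent_intervals (huint rs r hrs hr) (huint r 1 hr hone)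
    have hpos : 0 ≤ ∫ s in rs..r, u s :=
      intervalIntegral.integral_nonneg hle fun x hx =>
        hu0 x ⟨hrs.1.trans hx.1, hx.2.trans hr.2⟩
    have e1 := hfix' r hr
    have e2 := hfix' rs hrs
    rw [hvrs] at e2
    have hvr0 := hv0 r hr
    nlinarith [mul_nonneg (le_of_lt hlam) hpos]
  rcases eq_or_lt_of_le hrs.1 with hrs0 | hrspos
  · intro r hr
    exact hright r hr (hrs0 ▸ hr.1)
  -- now 0 < rs; left part
  have hsub : Icc (0:ℝ) rs ⊆ Icc (0:ℝ) 1 := Icc_subset_Icc le_rfl hrs.2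
  have hwz : ∀ p ∈ Icc (0:ℝ) rs, w p = 0 := by
    intro p hp
    have h1 := hwmono p rs (hsub hp) hrs hp.2
    have h2 := hw0' p (hsub hp)
    linarith
  have hhz : ∀ τ ∈ Icc (0:ℝ) rs, h τ = 0 := by
    intro τ hτ
    haveI : Fact (τ ∈ Icc (0:ℝ) rs) := ⟨hτ⟩
    have hmeash : StronglyMeasurableAtFilter h (𝓝[Icc (0:ℝ) rs] τ) :=
      (hhc.mono hsub).stronglyMeasurableAtFilter_nhdsWithin measurableSet_Icc τ
    have hd : HasDerivWithinAt w (h τ) (Icc 0 rs) τ :=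
      intervalIntegral.integral_hasDerivWithinAt_right
        (hhint 0 τ (by simp) (hsub hτ)) hmeash ((hhc.mono hsub) τ hτ)
    have hz : HasDerivWithinAt w 0 (Icc 0 rs) τ :=
      (hasDerivWithinAt_const τ (Icc 0 rs) (0:ℝ)).congr (fun x hx => hwz x hx) (hwz τ hτ)
    exact UniqueDiffWithinAt.eq_deriv _ (uniqueDiffOn_Icc hrspos τ hτ) hd hz
  have hvz : ∀ x, x ∈ Ioo (0:ℝ) rs → a x ≠ 0 → v x = 0 := by
    intro x hx hax
    have hx01 : x ∈ Icc (0:ℝ) 1 := ⟨hx.1.le, hx.2.le.trans hrs.2⟩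
    have h0 := hhz x ⟨hx.1.le, hx.2.le⟩
    rw [hhdef] at h0
    have h1 : (N : ℝ) * x ^ (N-1) * a x ≠ 0 :=
      mul_ne_zero (mul_ne_zero hN0 (pow_ne_zero _ (ne_of_gt hx.1))) hax
    have hFvx : F (v x) = 0 := by
      rcases mul_eq_zero.mp h0 with h2 | h2
      · exact absurd h2 h1
      · exact h2
    have hFvx' : v x ^ N + g (v x) = 0 := hFvx
    have hvx0 := hv0 x hx01
    have hgvx := hg0 (v x) hvx0
    have hpow : v x ^ N = 0 := by linarith [pow_nonneg hvx0 N]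
    exact pow_eq_zero_iff (by omega) |>.mp hpow
  have hleft : ∀ r ∈ Icc (0:ℝ) rs, v r = 0 := by
    intro r hr
    by_contra hne
    have hr01 := hsub hr
    have hpos : 0 < v r := lt_of_le_of_ne (hv0 r hr01) (Ne.symm hne)
    have hev : ∀ᶠ x in 𝓝[Icc (0:ℝ) 1] r, 0 < v x :=
      (hvc r hr01).eventually (eventually_gt_nhds hpos)
    obtain ⟨δ, hδ, hball⟩ := Metric.mem_nhdsWithin_iff.mp hev
    set s := max (r - δ) 0 with hs
    set t := min (r + δ) rs with ht
    have hst : s < t := by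
      rw [hs, ht]
      apply max_lt_iff.mpr
      constructor
      · exact lt_min (by linarith) (by linarith [hr.2])
      · exact lt_min (by linarith [hr.1]) hrspos
    obtain ⟨τ, hτmem, haτ⟩ := hanv s t (le_max_right _ _) hst
      ((min_le_right _ _).trans hrs.2)
    have hτ0 : 0 < τ := lt_of_le_of_lt (le_max_right _ _) hτmem.1
    have hτrs : τ < rs := lt_of_lt_of_le hτmem.2 (min_le_right _ _)
    have hτ01 : τ ∈ Icc (0:ℝ) 1 := ⟨hτ0.le, hτrs.le.trans hrs.2⟩
    have hdist : dist τ r < δ := by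
      rw [Real.dist_eq, abs_lt]
      have h1 : r - δ ≤ s := le_max_left _ _
      have h2 : t ≤ r + δ := min_le_left _ _
      constructor <;> [linarith [hτmem.1]; linarith [hτmem.2]]
    have hvτ : 0 < v τ := hball ⟨hdist, hτ01⟩
    have := hvz τ ⟨hτ0, hτrs⟩ haτ
    linarith
  intro r hr
  rcases le_total r rs with hle | hle
  · exact hleft r ⟨hr.1, hle⟩
  · exact hright r hr hle
end

section
/- Let b₁, b₂ ∈ C[0,1] with b₂(r) ≥ b₁(r) > 0 for all r ∈ (0,1). For i = 1,2 let u_i ∈ C¹[0,1] be such that r ↦ (−u_i'(r))^N is continuously differentiable on (0,1), ((−u_i')^N)'(r) = b_i(r) (u_i(r))^N for all r ∈ (0,1), and u_i'(0) = u_i(1) = 0. If u₁(r) ≠ 0 for all r ∈ (0,1), then either there exists τ ∈ (0,1) with u₂(τ) = 0, or b₂ = b₁ on (0,1) and u₂(r) = μ u₁(r) for some constant μ ≠ 0 and almost every r ∈ (0,1). -/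
open Set Filter Topology MeasureTheory

/-!
For positive solutions consider Picone's function `Q = u₁ ((-u₁')^N - (u₁ (-u₂') / u₂)^N)`.
Along the equations `Q' = (b₁ - b₂) u₁^(N+1) - D(-u₁', u₁ (-u₂') / u₂)`, where
`D(a, c) = a^(N+1) - (N+1) a c^N + N c^(N+1) ≥ 0` is the defect in Young's inequality, so `Q` is
nonincreasing on `(0, 1)`. It tends to `0` at `0` by the Neumann condition and at `1` because
`u₁` vanishes there while `u₁ (-u₂') / u₂ ≤ -u₁'(1)` by the monotonicity of `-u₁'` and `-u₂'`.
Hence `Q ≡ 0`, which forces `-u₁' u₂ = u₁ (-u₂')`, i.e. `u₂ / u₁` is constant, and then `Q' = 0`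
gives `b₁ = b₂`. Solutions without zeros have a constant sign and the problem is invariant under
scaling, which reduces the general case to positive solutions.
-/

lemma IsPreconnected.pos_or_neg_of_ne_zero {α : Type*} [TopologicalSpace α] {s : Set α}
    {f : α → ℝ} (hs : IsPreconnected s) (hf : ContinuousOn f s) (h0 : ∀ x ∈ s, f x ≠ 0) :
    (∀ x ∈ s, 0 < f x) ∨ ∀ x ∈ s, f x < 0 := by
  by_contra! h
  obtain ⟨⟨x, hx, hfx⟩, y, hy, hfy⟩ := h
  obtain ⟨z, hz, hfz⟩ := hs.intermediate_value hx hy hf ⟨hfx, hfy⟩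
  exact h0 z hz hfz

lemma IsPreconnected.exists_mul_pos_of_ne_zero {α : Type*} [TopologicalSpace α] {s : Set α}
    {f : α → ℝ} (hs : IsPreconnected s) (hf : ContinuousOn f s) (h0 : ∀ x ∈ s, f x ≠ 0) :
    ∃ σ : ℝ, σ ≠ 0 ∧ ∀ x ∈ s, 0 < σ * f x := by
  rcases hs.pos_or_neg_of_ne_zero hf h0 with h | h
  · exact ⟨1, one_ne_zero, fun x hx => by simpa using h x hx⟩
  · exact ⟨-1, by norm_num, fun x hx => by simpa using h x hx⟩

lemma sub_mem_Icc_of_monotoneOn_deriv {f f' : ℝ → ℝ} {a b : ℝ} (hab : a ≤ b)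
    (hf : ∀ x ∈ Icc a b, HasDerivWithinAt f (f' x) (Icc a b) x)
    (hf' : MonotoneOn f' (Icc a b)) :
    f b - f a ∈ Icc (f' a * (b - a)) (f' b * (b - a)) := by
  rcases hab.eq_or_lt with rfl | hab
  · simp
  obtain ⟨c, hc, hslope⟩ := exists_hasDerivAt_eq_slope f f' hab
    (fun x hx => (hf x hx).continuousWithinAt)
    (fun x hx => (hf x (Ioo_subset_Icc_self hx)).hasDerivAt (Icc_mem_nhds hx.1 hx.2))
  rw [eq_div_iff (sub_pos.2 hab).ne'] at hslope
  rw [← hslope]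
  have hc' := Ioo_subset_Icc_self hc
  exact ⟨mul_le_mul_of_nonneg_right (hf' (left_mem_Icc.2 hab.le) hc' hc.1.le) (sub_pos.2 hab).le,
    mul_le_mul_of_nonneg_right (hf' hc' (right_mem_Icc.2 hab.le) hc.2.le) (sub_pos.2 hab).le⟩

lemma AntitoneOn.eqOn_of_tendsto {f : ℝ → ℝ} {a b L : ℝ} (hf : AntitoneOn f (Ioo a b))
    (ha : Tendsto f (𝓝[>] a) (𝓝 L)) (hb : Tendsto f (𝓝[<] b) (𝓝 L)) :
    ∀ x ∈ Ioo a b, f x = L := by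
  intro x hx
  apply le_antisymm
  · refine ge_of_tendsto ha ?_
    filter_upwards [Ioo_mem_nhdsGT hx.1] with s hs
    exact hf ⟨hs.1, hs.2.trans hx.2⟩ hx hs.2.le
  · refine le_of_tendsto hb ?_
    filter_upwards [Ioo_mem_nhdsLT hx.2] with s hs
    exact hf hx ⟨hx.1.trans hs.1, hs.2⟩ hs.1.le

lemma exists_eq_const_mul_of_wronskian_eq_zero {s : Set ℝ} {u₁ u₁' u₂ u₂' : ℝ → ℝ}
    (hs : IsOpen s) (hs' : IsPreconnected s) (h₁ : ∀ x ∈ s, HasDerivAt u₁ (u₁' x) x)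
    (h₂ : ∀ x ∈ s, HasDerivAt u₂ (u₂' x) x) (hu₁ : ∀ x ∈ s, u₁ x ≠ 0)
    (hW : ∀ x ∈ s, u₁ x * u₂' x = u₁' x * u₂ x) :
    ∃ μ : ℝ, ∀ x ∈ s, u₂ x = μ * u₁ x := by
  have hderiv : ∀ x ∈ s, HasDerivAt (fun t => u₂ t / u₁ t) 0 x := fun x hx => by
    refine ((h₂ x hx).div (h₁ x hx) (hu₁ x hx)).congr_deriv ?_
    rw [mul_comm (u₂' x), hW x hx, mul_comm (u₁' x), sub_self, zero_div]
  obtain ⟨μ, hμ⟩ := hs.exists_is_const_of_deriv_eq_zero hs'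
    (fun x hx => (hderiv x hx).differentiableAt.differentiableWithinAt)
    (fun x hx => (hderiv x hx).deriv)
  exact ⟨μ, fun x hx => by rw [← hμ x hx, div_mul_cancel₀ _ (hu₁ x hx)]⟩


def youngDefect (N : ℕ) (a c : ℝ) : ℝ := a ^ (N + 1) - (N + 1) * a * c ^ N + N * c ^ (N + 1)

lemma youngDefect_self (N : ℕ) (a : ℝ) : youngDefect N a a = 0 := by
  unfold youngDefect; ring

lemma youngDefect_nonneg (N : ℕ) {a c : ℝ} (ha : 0 ≤ a) (hc : 0 ≤ c) : 0 ≤ youngDefect N a c := by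
  rcases hc.eq_or_lt with rfl | hc
  · rcases N with _ | N
    · simp [youngDefect]
    · simpa [youngDefect] using pow_nonneg ha (N + 2)
  -- Bernoulli's inequality for `t = a / c`, homogenised by `c ^ (N + 1)`
  have hB := one_add_mul_le_pow (a := a / c - 1) (by linarith [div_nonneg ha hc.le]) (N + 1)
  rw [add_sub_cancel] at hB
  calc (0 : ℝ) ≤ c ^ (N + 1) * ((a / c) ^ (N + 1) - (1 + ((N + 1 : ℕ) : ℝ) * (a / c - 1))) :=
        mul_nonneg (by positivity) (sub_nonneg.2 hB)
    _ = youngDefect N a c := by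
        unfold youngDefect
        rw [div_pow]
        field_simp
        push_cast
        ring

noncomputable def picone (N : ℕ) (u₁ u₁' u₂ u₂' : ℝ → ℝ) (r : ℝ) : ℝ :=
  u₁ r * ((-u₁' r) ^ N - (u₁ r * -u₂' r / u₂ r) ^ N)

lemma hasDerivAt_picone {N : ℕ} {u₁ u₁' u₂ u₂' : ℝ → ℝ} {b₁ b₂ x : ℝ}
    (h₁ : HasDerivAt u₁ (u₁' x) x) (h₁' : HasDerivAt (fun t => (-u₁' t) ^ N) (b₁ * u₁ x ^ N) x)
    (h₂ : HasDerivAt u₂ (u₂' x) x) (h₂' : HasDerivAt (fun t => (-u₂' t) ^ N) (b₂ * u₂ x ^ N) x)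
    (hx : u₂ x ≠ 0) :
    HasDerivAt (picone N u₁ u₁' u₂ u₂')
      ((b₁ - b₂) * u₁ x ^ (N + 1) - youngDefect N (-u₁' x) (u₁ x * -u₂' x / u₂ x)) x := by
  have hfun : picone N u₁ u₁' u₂ u₂' =
      fun t => u₁ t * (-u₁' t) ^ N - u₁ t ^ (N + 1) * (-u₂' t) ^ N / u₂ t ^ N := by
    funext t
    simp only [picone]
    rw [div_pow, mul_pow]
    ring
  rw [hfun]
  refine ((h₁.mul h₁').sub (((h₁.pow (N + 1)).mul h₂').div (h₂.pow N)
    (pow_ne_zero N hx))).congr_deriv ?_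
  simp only [Pi.pow_apply, Pi.mul_apply]
  rcases N with _ | N
  · simp [youngDefect, mul_sub, mul_comm]
  · simp only [youngDefect, Nat.add_sub_cancel, div_pow]
    field_simp
    push_cast
    ring

structure IsRadialSolution (N : ℕ) (b u u' : ℝ → ℝ) : Prop where
  continuousOn_deriv : ContinuousOn u' (Icc 0 1)
  hasDerivWithinAt : ∀ r ∈ Icc (0 : ℝ) 1, HasDerivWithinAt u (u' r) (Icc 0 1) r
  hasDerivAt_pow : ∀ r ∈ Ioo (0 : ℝ) 1, HasDerivAt (fun t => (-u' t) ^ N) (b r * u r ^ N) r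
  neumann : u' 0 = 0
  dirichlet : u 1 = 0

namespace IsRadialSolution

variable {N : ℕ} {b u u' : ℝ → ℝ}

lemma continuousOn (h : IsRadialSolution N b u u') : ContinuousOn u (Icc 0 1) :=
  fun r hr => (h.hasDerivWithinAt r hr).continuousWithinAt

lemma hasDerivAt (h : IsRadialSolution N b u u') {r : ℝ} (hr : r ∈ Ioo (0 : ℝ) 1) :
    HasDerivAt u (u' r) r :=
  (h.hasDerivWithinAt r (Ioo_subset_Icc_self hr)).hasDerivAt (Icc_mem_nhds hr.1 hr.2)

lemma const_mul (h : IsRadialSolution N b u u') (c : ℝ) :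
    IsRadialSolution N b (fun t => c * u t) (fun t => c * u' t) where
  continuousOn_deriv := continuousOn_const.mul h.continuousOn_deriv
  hasDerivWithinAt r hr := (h.hasDerivWithinAt r hr).const_mul c
  hasDerivAt_pow r hr := by
    have hfun : (fun t => (-(c * u' t)) ^ N) = fun t => c ^ N * (-u' t) ^ N := by
      funext t
      ring
    simp only [hfun]
    exact ((h.hasDerivAt_pow r hr).const_mul (c ^ N)).congr_deriv (by ring)
  neumann := by simp [h.neumann]
  dirichlet := by simp [h.dirichlet]

lemma strictMonoOn_neg_deriv_pow (h : IsRadialSolution N b u u')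
    (hb : ∀ r ∈ Ioo (0 : ℝ) 1, 0 < b r) (hu : ∀ r ∈ Ioo (0 : ℝ) 1, 0 < u r) :
    StrictMonoOn (fun t => (-u' t) ^ N) (Icc 0 1) := by
  refine strictMonoOn_of_deriv_pos (convex_Icc 0 1) (h.continuousOn_deriv.neg.pow N) ?_
  rw [interior_Icc]
  intro r hr
  rw [(h.hasDerivAt_pow r hr).deriv]
  exact mul_pos (hb r hr) (pow_pos (hu r hr) N)

lemma neg_deriv_pos (h : IsRadialSolution N b u u') (hN : N ≠ 0)
    (hb : ∀ r ∈ Ioo (0 : ℝ) 1, 0 < b r) (hu : ∀ r ∈ Ioo (0 : ℝ) 1, 0 < u r) :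
    ∀ r ∈ Ioc (0 : ℝ) 1, 0 < -u' r := by
  have hne : ∀ r ∈ Ioc (0 : ℝ) 1, -u' r ≠ 0 := fun r hr hr0 => by
    have := h.strictMonoOn_neg_deriv_pow hb hu (left_mem_Icc.2 zero_le_one)
      (Ioc_subset_Icc_self hr) hr.1
    simp [h.neumann, hr0, zero_pow hN] at this
  refine (isPreconnected_Ioc.pos_or_neg_of_ne_zero
    (h.continuousOn_deriv.neg.mono Ioc_subset_Icc_self) hne).resolve_right fun hneg => ?_
  -- otherwise `u` would increase on `[1/2, 1]`, from `u (1/2) > 0` to `u 1 = 0`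
  obtain ⟨c, hc, hslope⟩ := exists_hasDerivAt_eq_slope u u' (by norm_num : (1 / 2 : ℝ) < 1)
    (h.continuousOn.mono (Icc_subset_Icc (by norm_num) le_rfl))
    (fun x hx => h.hasDerivAt ⟨by linarith [hx.1], hx.2⟩)
  have hc0 : -u' c < 0 := hneg c ⟨by linarith [hc.1], hc.2.le⟩
  rw [hslope, h.dirichlet] at hc0
  norm_num at hc0
  linarith [hu (1 / 2) (by norm_num)]

lemma neg_deriv_nonneg (h : IsRadialSolution N b u u') (hN : N ≠ 0)
    (hb : ∀ r ∈ Ioo (0 : ℝ) 1, 0 < b r) (hu : ∀ r ∈ Ioo (0 : ℝ) 1, 0 < u r) :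
    ∀ r ∈ Icc (0 : ℝ) 1, 0 ≤ -u' r := by
  intro r hr
  rcases hr.1.eq_or_lt with rfl | hr0
  · simp [h.neumann]
  · exact (h.neg_deriv_pos hN hb hu r ⟨hr0, hr.2⟩).le

lemma monotoneOn_neg_deriv (h : IsRadialSolution N b u u') (hN : N ≠ 0)
    (hb : ∀ r ∈ Ioo (0 : ℝ) 1, 0 < b r) (hu : ∀ r ∈ Ioo (0 : ℝ) 1, 0 < u r) :
    MonotoneOn (fun t => -u' t) (Icc 0 1) := fun x hx y hy hxy =>
  (pow_le_pow_iff_left₀ (h.neg_deriv_nonneg hN hb hu x hx) (h.neg_deriv_nonneg hN hb hu y hy)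
    hN).1 ((h.strictMonoOn_neg_deriv_pow hb hu).monotoneOn hx hy hxy)

lemma sub_mem_Icc (h : IsRadialSolution N b u u') (hN : N ≠ 0)
    (hb : ∀ r ∈ Ioo (0 : ℝ) 1, 0 < b r) (hu : ∀ r ∈ Ioo (0 : ℝ) 1, 0 < u r)
    {r s : ℝ} (hr : 0 ≤ r) (hrs : r ≤ s) (hs : s ≤ 1) :
    u r - u s ∈ Icc (-u' r * (s - r)) (-u' s * (s - r)) := by
  have hsub : Icc r s ⊆ Icc 0 1 := Icc_subset_Icc hr hs
  have key := sub_mem_Icc_of_monotoneOn_deriv (f := fun t => -u t) hrs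
    (fun x hx => ((h.hasDerivWithinAt x (hsub hx)).mono hsub).neg)
    ((h.monotoneOn_neg_deriv hN hb hu).mono hsub)
  rwa [neg_sub_neg] at key

lemma pos_zero (h : IsRadialSolution N b u u') (hN : N ≠ 0)
    (hb : ∀ r ∈ Ioo (0 : ℝ) 1, 0 < b r) (hu : ∀ r ∈ Ioo (0 : ℝ) 1, 0 < u r) : 0 < u 0 := by
  have := (h.sub_mem_Icc hN hb hu le_rfl (by norm_num : (0 : ℝ) ≤ 1 / 2) (by norm_num)).1
  rw [h.neumann] at this
  linarith [hu (1 / 2) (by norm_num)]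

end IsRadialSolution

section Picone

variable {N : ℕ} {b₁ b₂ u₁ u₁' u₂ u₂' : ℝ → ℝ}

lemma tendsto_picone_nhdsGT_zero (hN : N ≠ 0) (h₁ : IsRadialSolution N b₁ u₁ u₁')
    (h₂ : IsRadialSolution N b₂ u₂ u₂') (hu₂ : u₂ 0 ≠ 0) :
    Tendsto (picone N u₁ u₁' u₂ u₂') (𝓝[>] 0) (𝓝 0) := by
  have hmem : (0 : ℝ) ∈ Icc 0 1 := left_mem_Icc.2 zero_le_one
  have hcont : ContinuousWithinAt (picone N u₁ u₁' u₂ u₂') (Icc 0 1) 0 :=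
    (h₁.continuousOn 0 hmem).mul ((h₁.continuousOn_deriv 0 hmem).neg.pow N |>.sub
      ((((h₁.continuousOn 0 hmem).mul (h₂.continuousOn_deriv 0 hmem).neg).div
        (h₂.continuousOn 0 hmem) hu₂).pow N))
  have hzero : picone N u₁ u₁' u₂ u₂' 0 = 0 := by
    simp [picone, h₁.neumann, h₂.neumann, zero_pow hN]
  simpa only [hzero] using hcont.tendsto.mono_left <| nhdsWithin_le_of_mem <|
    mem_of_superset (Ioo_mem_nhdsGT zero_lt_one) Ioo_subset_Icc_self

lemma tendsto_picone_nhdsLT_one (hN : N ≠ 0) (h₁ : IsRadialSolution N b₁ u₁ u₁')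
    (h₂ : IsRadialSolution N b₂ u₂ u₂') (hb₁ : ∀ r ∈ Ioo (0 : ℝ) 1, 0 < b₁ r)
    (hb₂ : ∀ r ∈ Ioo (0 : ℝ) 1, 0 < b₂ r) (hu₁ : ∀ r ∈ Ioo (0 : ℝ) 1, 0 < u₁ r)
    (hu₂ : ∀ r ∈ Ioo (0 : ℝ) 1, 0 < u₂ r) :
    Tendsto (picone N u₁ u₁' u₂ u₂') (𝓝[<] 1) (𝓝 0) := by
  have hu₁_one : Tendsto u₁ (𝓝[<] 1) (𝓝 0) := by
    rw [← h₁.dirichlet]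
    exact (h₁.continuousOn 1 (right_mem_Icc.2 zero_le_one)).tendsto.mono_left <|
      nhdsWithin_le_of_mem (Icc_mem_nhdsLT zero_lt_one)
  set A := -u₁' 1
  -- both `-u₁'` and `u₁ (-u₂') / u₂` stay in `[0, A]`, the latter because `u₁ ≤ A (1 - s)`
  -- and `-u₂' s (1 - s) ≤ u₂ s`
  have hbound : ∀ s ∈ Ioo (0 : ℝ) 1, |(-u₁' s) ^ N - (u₁ s * -u₂' s / u₂ s) ^ N| ≤ A ^ N := by
    intro s hs
    have ha₀ := h₁.neg_deriv_nonneg hN hb₁ hu₁ s (Ioo_subset_Icc_self hs)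
    have haA := h₁.monotoneOn_neg_deriv hN hb₁ hu₁ (Ioo_subset_Icc_self hs)
      (right_mem_Icc.2 zero_le_one) hs.2.le
    have hv₀ := h₂.neg_deriv_nonneg hN hb₂ hu₂ s (Ioo_subset_Icc_self hs)
    have hu₁s := (h₁.sub_mem_Icc hN hb₁ hu₁ hs.1.le hs.2.le le_rfl).2
    have hu₂s := (h₂.sub_mem_Icc hN hb₂ hu₂ hs.1.le hs.2.le le_rfl).1
    rw [h₁.dirichlet, sub_zero] at hu₁s
    rw [h₂.dirichlet, sub_zero] at hu₂s
    have hc₀ : 0 ≤ u₁ s * -u₂' s / u₂ s := by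
      have := hu₁ s hs
      have := hu₂ s hs
      positivity
    have hcA : u₁ s * -u₂' s / u₂ s ≤ A := by
      rw [div_le_iff₀ (hu₂ s hs)]
      calc u₁ s * -u₂' s ≤ A * (1 - s) * -u₂' s := mul_le_mul_of_nonneg_right hu₁s hv₀
        _ = A * (-u₂' s * (1 - s)) := by ring
        _ ≤ A * u₂ s := mul_le_mul_of_nonneg_left hu₂s (ha₀.trans haA)
    rw [abs_sub_le_iff]
    constructor <;> linarith [pow_le_pow_left₀ ha₀ haA N, pow_le_pow_left₀ hc₀ hcA N,
      pow_nonneg ha₀ N, pow_nonneg hc₀ N]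
  refine hu₁_one.zero_mul_isBoundedUnder_le (isBoundedUnder_of_eventually_le (a := A ^ N) ?_)
  filter_upwards [Ioo_mem_nhdsLT zero_lt_one] with s hs
  exact hbound s hs

lemma picone_eq_zero (hN : N ≠ 0) (h₁ : IsRadialSolution N b₁ u₁ u₁')
    (h₂ : IsRadialSolution N b₂ u₂ u₂') (hb₁ : ∀ r ∈ Ioo (0 : ℝ) 1, 0 < b₁ r)
    (hb : ∀ r ∈ Ioo (0 : ℝ) 1, b₁ r ≤ b₂ r) (hu₁ : ∀ r ∈ Ioo (0 : ℝ) 1, 0 < u₁ r)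
    (hu₂ : ∀ r ∈ Ioo (0 : ℝ) 1, 0 < u₂ r) :
    ∀ r ∈ Ioo (0 : ℝ) 1, picone N u₁ u₁' u₂ u₂' r = 0 := by
  have hb₂ : ∀ r ∈ Ioo (0 : ℝ) 1, 0 < b₂ r := fun r hr => (hb₁ r hr).trans_le (hb r hr)
  have hderiv := fun r (hr : r ∈ Ioo (0 : ℝ) 1) => hasDerivAt_picone (h₁.hasDerivAt hr)
    (h₁.hasDerivAt_pow r hr) (h₂.hasDerivAt hr) (h₂.hasDerivAt_pow r hr) (hu₂ r hr).ne'
  have hanti : AntitoneOn (picone N u₁ u₁' u₂ u₂') (Ioo 0 1) := by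
    refine antitoneOn_of_deriv_nonpos (convex_Ioo 0 1)
      (fun r hr => (hderiv r hr).continuousAt.continuousWithinAt) ?_ ?_ <;> rw [interior_Ioo]
    · exact fun r hr => (hderiv r hr).differentiableAt.differentiableWithinAt
    · intro r hr
      rw [(hderiv r hr).deriv]
      have hyoung := youngDefect_nonneg N
        (h₁.neg_deriv_nonneg hN hb₁ hu₁ r (Ioo_subset_Icc_self hr))
        (div_nonneg (mul_nonneg (hu₁ r hr).le
          (h₂.neg_deriv_nonneg hN hb₂ hu₂ r (Ioo_subset_Icc_self hr))) (hu₂ r hr).le)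
      nlinarith [hb r hr, pow_pos (hu₁ r hr) (N + 1)]
  exact hanti.eqOn_of_tendsto (tendsto_picone_nhdsGT_zero hN h₁ h₂ (h₂.pos_zero hN hb₂ hu₂).ne')
    (tendsto_picone_nhdsLT_one hN h₁ h₂ hb₁ hb₂ hu₁ hu₂)

end Picone

section Rigidity

variable {N : ℕ} {b₁ b₂ u₁ u₁' u₂ u₂' : ℝ → ℝ}

theorem rigidity_of_pos (hN : N ≠ 0) (h₁ : IsRadialSolution N b₁ u₁ u₁')
    (h₂ : IsRadialSolution N b₂ u₂ u₂') (hb₁ : ∀ r ∈ Ioo (0 : ℝ) 1, 0 < b₁ r)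
    (hb : ∀ r ∈ Ioo (0 : ℝ) 1, b₁ r ≤ b₂ r) (hu₁ : ∀ r ∈ Ioo (0 : ℝ) 1, 0 < u₁ r)
    (hu₂ : ∀ r ∈ Ioo (0 : ℝ) 1, 0 < u₂ r) :
    (∀ r ∈ Ioo (0 : ℝ) 1, b₂ r = b₁ r) ∧ ∃ μ : ℝ, μ ≠ 0 ∧ ∀ r ∈ Ioo (0 : ℝ) 1, u₂ r = μ * u₁ r := by
  have hb₂ : ∀ r ∈ Ioo (0 : ℝ) 1, 0 < b₂ r := fun r hr => (hb₁ r hr).trans_le (hb r hr)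
  have hzero := picone_eq_zero hN h₁ h₂ hb₁ hb hu₁ hu₂
  have hW : ∀ r ∈ Ioo (0 : ℝ) 1, -u₁' r = u₁ r * -u₂' r / u₂ r := by
    intro r hr
    have hr' := Ioo_subset_Icc_self hr
    have := hzero r hr
    rw [picone, mul_eq_zero, sub_eq_zero] at this
    refine (pow_left_inj₀ (h₁.neg_deriv_nonneg hN hb₁ hu₁ r hr') ?_ hN).1
      (this.resolve_left (hu₁ r hr).ne')
    exact div_nonneg (mul_nonneg (hu₁ r hr).le (h₂.neg_deriv_nonneg hN hb₂ hu₂ r hr')) (hu₂ r hr).le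
  have hb_eq : ∀ r ∈ Ioo (0 : ℝ) 1, b₂ r = b₁ r := by
    intro r hr
    have hconst : HasDerivAt (picone N u₁ u₁' u₂ u₂') 0 r :=
      (hasDerivAt_const r 0).congr_of_eventuallyEq <|
        eventually_of_mem (Ioo_mem_nhds hr.1 hr.2) hzero
    have := (hasDerivAt_picone (h₁.hasDerivAt hr) (h₁.hasDerivAt_pow r hr) (h₂.hasDerivAt hr)
      (h₂.hasDerivAt_pow r hr) (hu₂ r hr).ne').unique hconst
    rw [← hW r hr, youngDefect_self, sub_zero, mul_eq_zero] at this
    linarith [this.resolve_right (pow_ne_zero _ (hu₁ r hr).ne')]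
  obtain ⟨μ, hμ⟩ := exists_eq_const_mul_of_wronskian_eq_zero isOpen_Ioo isPreconnected_Ioo
    (fun r hr => h₁.hasDerivAt hr) (fun r hr => h₂.hasDerivAt hr) (fun r hr => (hu₁ r hr).ne')
    fun r hr => by
      have := hW r hr
      rw [eq_div_iff (hu₂ r hr).ne'] at this
      linarith
  refine ⟨hb_eq, μ, ?_, hμ⟩
  rintro rfl
  have := hμ (1 / 2) (by norm_num)
  linarith [hu₂ (1 / 2) (by norm_num)]

theorem rigidity (hN : N ≠ 0) (h₁ : IsRadialSolution N b₁ u₁ u₁')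
    (h₂ : IsRadialSolution N b₂ u₂ u₂') (hb₁ : ∀ r ∈ Ioo (0 : ℝ) 1, 0 < b₁ r)
    (hb : ∀ r ∈ Ioo (0 : ℝ) 1, b₁ r ≤ b₂ r) (hu₁ : ∀ r ∈ Ioo (0 : ℝ) 1, u₁ r ≠ 0)
    (hu₂ : ∀ r ∈ Ioo (0 : ℝ) 1, u₂ r ≠ 0) :
    (∀ r ∈ Ioo (0 : ℝ) 1, b₂ r = b₁ r) ∧ ∃ μ : ℝ, μ ≠ 0 ∧ ∀ r ∈ Ioo (0 : ℝ) 1, u₂ r = μ * u₁ r := by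
  obtain ⟨σ₁, hσ₁, hpos₁⟩ := isPreconnected_Ioo.exists_mul_pos_of_ne_zero
    (h₁.continuousOn.mono Ioo_subset_Icc_self) hu₁
  obtain ⟨σ₂, hσ₂, hpos₂⟩ := isPreconnected_Ioo.exists_mul_pos_of_ne_zero
    (h₂.continuousOn.mono Ioo_subset_Icc_self) hu₂
  obtain ⟨hb_eq, μ, hμ, hμ_eq⟩ :=
    rigidity_of_pos hN (h₁.const_mul σ₁) (h₂.const_mul σ₂) hb₁ hb hpos₁ hpos₂
  refine ⟨hb_eq, σ₂⁻¹ * μ * σ₁, by positivity, fun r hr => ?_⟩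
  rw [← inv_mul_cancel_left₀ hσ₂ (u₂ r), hμ_eq r hr]
  ring

end Rigidity

theorem stmt9_general (N : ℕ) (hN : 1 ≤ N) (b1 b2 : ℝ → ℝ)
    (hb : ∀ r ∈ Ioo (0:ℝ) 1, 0 < b1 r ∧ b1 r ≤ b2 r)
    (u1 u1' u2 u2' : ℝ → ℝ)
    (hu1'c : ContinuousOn u1' (Icc 0 1))
    (hu1d : ∀ r ∈ Icc (0:ℝ) 1, HasDerivWithinAt u1 (u1' r) (Icc 0 1) r)
    (hu1eq : ∀ r ∈ Ioo (0:ℝ) 1,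
      HasDerivAt (fun t => (-u1' t) ^ N) (b1 r * (u1 r) ^ N) r)
    (hu1b0 : u1' 0 = 0) (hu1b1 : u1 1 = 0)
    (hu2'c : ContinuousOn u2' (Icc 0 1))
    (hu2d : ∀ r ∈ Icc (0:ℝ) 1, HasDerivWithinAt u2 (u2' r) (Icc 0 1) r)
    (hu2eq : ∀ r ∈ Ioo (0:ℝ) 1,
      HasDerivAt (fun t => (-u2' t) ^ N) (b2 r * (u2 r) ^ N) r)
    (hu2b0 : u2' 0 = 0) (hu2b1 : u2 1 = 0)
    (hu1ne : ∀ r ∈ Ioo (0:ℝ) 1, u1 r ≠ 0) :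
    (∃ τ ∈ Ioo (0:ℝ) 1, u2 τ = 0) ∨
    ((∀ r ∈ Ioo (0:ℝ) 1, b2 r = b1 r) ∧
     ∃ μ : ℝ, μ ≠ 0 ∧ ∀ᵐ r : ℝ ∂volume, r ∈ Ioo (0:ℝ) 1 → u2 r = μ * u1 r) := by
  by_cases hzero : ∃ τ ∈ Ioo (0:ℝ) 1, u2 τ = 0
  · exact Or.inl hzero
  push Not at hzero
  obtain ⟨hb_eq, μ, hμ, hμ_eq⟩ := rigidity (Nat.one_le_iff_ne_zero.1 hN)
    ⟨hu1'c, hu1d, hu1eq, hu1b0, hu1b1⟩ ⟨hu2'c, hu2d, hu2eq, hu2b0, hu2b1⟩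
    (fun r hr => (hb r hr).1) (fun r hr => (hb r hr).2) hu1ne hzero
  exact Or.inr ⟨hb_eq, μ, hμ, ae_of_all _ hμ_eq⟩

theorem stmt9 (N : ℕ) (hN : 1 ≤ N) (b1 b2 : ℝ → ℝ)
    (hb1c : ContinuousOn b1 (Icc 0 1)) (hb2c : ContinuousOn b2 (Icc 0 1))
    (hb : ∀ r ∈ Ioo (0:ℝ) 1, 0 < b1 r ∧ b1 r ≤ b2 r)
    (u1 u1' u2 u2' : ℝ → ℝ)
    (hu1'c : ContinuousOn u1' (Icc 0 1))
    (hu1d : ∀ r ∈ Icc (0:ℝ) 1, HasDerivWithinAt u1 (u1' r) (Icc 0 1) r)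
    (hu1eq : ∀ r ∈ Ioo (0:ℝ) 1,
      HasDerivAt (fun t => (-u1' t) ^ N) (b1 r * (u1 r) ^ N) r)
    (hu1b0 : u1' 0 = 0) (hu1b1 : u1 1 = 0)
    (hu2'c : ContinuousOn u2' (Icc 0 1))
    (hu2d : ∀ r ∈ Icc (0:ℝ) 1, HasDerivWithinAt u2 (u2' r) (Icc 0 1) r)
    (hu2eq : ∀ r ∈ Ioo (0:ℝ) 1,
      HasDerivAt (fun t => (-u2' t) ^ N) (b2 r * (u2 r) ^ N) r)
    (hu2b0 : u2' 0 = 0) (hu2b1 : u2 1 = 0)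
    (hu1ne : ∀ r ∈ Ioo (0:ℝ) 1, u1 r ≠ 0) :
    (∃ τ ∈ Ioo (0:ℝ) 1, u2 τ = 0) ∨
    ((∀ r ∈ Ioo (0:ℝ) 1, b2 r = b1 r) ∧
     ∃ μ : ℝ, μ ≠ 0 ∧ ∀ᵐ r : ℝ ∂volume, r ∈ Ioo (0:ℝ) 1 → u2 r = μ * u1 r) :=
  stmt9_general N hN b1 b2 hb u1 u1' u2 u2' hu1'c hu1d hu1eq hu1b0 hu1b1 hu2'c hu2d hu2eq hu2b0
    hu2b1 hu1ne
end

section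
/- Let f : [0,∞) → [0,∞) be continuous with f(s) > 0 for all s > 0, and assume there exists ρ > 0 such that f(s)/s^N ≥ ρ for all s > 0. Then there exists ζ* > 0 such that for every λ ∈ (ζ*, +∞) there is no v ∈ C([0,1],[0,∞)) with v ≢ 0 satisfying v = λ T_f v. -/
open Set Filter Topology intervalIntegral

/-- From the non-vanishing hypothesis and continuity, extract a closed subinterval
on which `a` is bounded below by a positive constant. -/
lemma exists_subinterval (a : ℝ → ℝ) (ha : ContinuousOn a (Icc 0 1))
    (ha0 : ∀ r ∈ Icc (0:ℝ) 1, 0 ≤ a r)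
    (hanv : ∀ s t : ℝ, 0 ≤ s → s < t → t ≤ 1 → ∃ r ∈ Ioo s t, a r ≠ 0)
    (s t : ℝ) (hs : 0 ≤ s) (hst : s < t) (ht : t ≤ 1) :
    ∃ α β ε : ℝ, s < α ∧ α < β ∧ β < t ∧ 0 < ε ∧ ∀ τ ∈ Icc α β, ε ≤ a τ := by
  obtain ⟨r, hr, hne⟩ := hanv s t hs hst ht
  have hrmem : r ∈ Icc (0:ℝ) 1 := ⟨hs.trans hr.1.le, hr.2.le.trans ht⟩
  have hapos : 0 < a r := lt_of_le_of_ne (ha0 r hrmem) (Ne.symm hne)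
  have hev : {x : ℝ | a r / 2 < a x} ∈ 𝓝[Icc (0:ℝ) 1] r :=
    (ha r hrmem).eventually (lt_mem_nhds (half_lt_self hapos))
  rw [Metric.mem_nhdsWithin_iff] at hev
  obtain ⟨δ, hδ, hball⟩ := hev
  set δ' := min (δ/2) (min ((r - s)/2) ((t - r)/2)) with hδ'def
  have h1 : (0:ℝ) < (r - s)/2 := by linarith [hr.1]
  have h2 : (0:ℝ) < (t - r)/2 := by linarith [hr.2]
  have hδ'pos : 0 < δ' := lt_min (by linarith) (lt_min h1 h2)
  have hδ'1 : δ' ≤ δ/2 := min_le_left _ _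
  have hδ'2 : δ' ≤ (r - s)/2 := (min_le_right _ _).trans (min_le_left _ _)
  have hδ'3 : δ' ≤ (t - r)/2 := (min_le_right _ _).trans (min_le_right _ _)
  refine ⟨r - δ', r + δ', a r / 2, by linarith, by linarith, by linarith,
    half_pos hapos, ?_⟩
  intro τ hτ
  have hτmem : τ ∈ Icc (0:ℝ) 1 :=
    ⟨by linarith [hτ.1], by linarith [hτ.2]⟩
  have hdist : dist τ r < δ := by
    rw [Real.dist_eq, abs_lt]
    constructor <;> [linarith [hτ.1]; linarith [hτ.2]]
  exact (hball ⟨Metric.mem_ball.mpr hdist, hτmem⟩).le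

/-- Key lower bound for the inner integral. -/
lemma inner_lower (N : ℕ) (hN : 1 ≤ N) (a : ℝ → ℝ)
    (ha : ContinuousOn a (Icc 0 1)) (ha0 : ∀ r ∈ Icc (0:ℝ) 1, 0 ≤ a r)
    (f : ℝ → ℝ) (hf : ContinuousOn f (Ici 0))
    (hfnonneg : ∀ s ≥ (0:ℝ), 0 ≤ f s)
    (ρ : ℝ) (hρ : 0 < ρ) (hlow : ∀ s > (0:ℝ), ρ ≤ f s / s ^ N)
    (v : ℝ → ℝ) (hv : ContinuousOn v (Icc 0 1)) (hv0 : ∀ r ∈ Icc (0:ℝ) 1, 0 ≤ v r)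
    (α β ε : ℝ) (hα : 0 < α) (hαβ : α < β) (hβ : β ≤ 1) (hε : 0 < ε)
    (haε : ∀ τ ∈ Icc α β, ε ≤ a τ)
    (c : ℝ) (hc : 0 < c) (hvc : ∀ τ ∈ Icc α β, c ≤ v τ)
    (s : ℝ) (hs : β ≤ s) (hs1 : s ≤ 1) :
    (N : ℝ) * α ^ (N - 1) * ε * ρ * c ^ N * (β - α)
      ≤ ∫ τ in (0:ℝ)..s, (N : ℝ) * τ ^ (N - 1) * a τ * f (v τ) := by
  have hmaps : MapsTo v (Icc 0 1) (Ici 0) := fun x hx => hv0 x hx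
  have hhcont : ContinuousOn (fun τ => (N : ℝ) * τ ^ (N - 1) * a τ * f (v τ)) (Icc 0 1) := by
    exact (((continuous_const.mul (continuous_pow _)).continuousOn.mul ha).mul
      (hf.comp hv hmaps))
  have hhnn : ∀ τ ∈ Icc (0:ℝ) 1, 0 ≤ (N : ℝ) * τ ^ (N - 1) * a τ * f (v τ) := by
    intro τ hτ
    have h1 : (0:ℝ) ≤ τ := hτ.1
    have h2 : 0 ≤ a τ := ha0 τ hτ
    have h3 : 0 ≤ f (v τ) := hfnonneg _ (hv0 τ hτ)
    positivity
  have hsubset : Icc (0:ℝ) s ⊆ Icc 0 1 := Icc_subset_Icc le_rfl hs1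
  have hint : IntervalIntegrable (fun τ => (N : ℝ) * τ ^ (N - 1) * a τ * f (v τ))
      MeasureTheory.volume 0 s := by
    apply ContinuousOn.intervalIntegrable
    rw [uIcc_of_le ((hαβ.trans_le hs).le.trans' hα.le)]
    exact hhcont.mono hsubset
  have hstep1 : ∫ τ in α..β, ((N : ℝ) * α ^ (N - 1) * ε * (ρ * c ^ N))
      ≤ ∫ τ in α..β, (N : ℝ) * τ ^ (N - 1) * a τ * f (v τ) := by
    apply intervalIntegral.integral_mono_on hαβ.le
    · exact intervalIntegrable_const
    · apply hint.mono_set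
      rw [uIcc_of_le hαβ.le, uIcc_of_le ((hαβ.trans_le hs).le.trans' hα.le)]
      exact Icc_subset_Icc hα.le hs
    · intro τ hτ
      have hτ01 : τ ∈ Icc (0:ℝ) 1 := ⟨hα.le.trans hτ.1, hτ.2.trans hβ⟩
      have hvτ : 0 < v τ := hc.trans_le (hvc τ hτ)
      have hfle : ρ * v τ ^ N ≤ f (v τ) := by
        have := hlow (v τ) hvτ
        rw [le_div_iff₀ (pow_pos hvτ N)] at this
        linarith
      have hfle2 : ρ * c ^ N ≤ f (v τ) := by
        refine le_trans ?_ hfle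
        have := pow_le_pow_left₀ hc.le (hvc τ hτ) N
        nlinarith
      have hpow : α ^ (N - 1) ≤ τ ^ (N - 1) := pow_le_pow_left₀ hα.le hτ.1 _
      have haτ : ε ≤ a τ := haε τ hτ
      calc (N : ℝ) * α ^ (N - 1) * ε * (ρ * c ^ N)
          ≤ (N : ℝ) * τ ^ (N - 1) * a τ * (ρ * c ^ N) := by
            have h0 : (0:ℝ) ≤ ρ * c ^ N := by positivity
            have hNn : (0:ℝ) ≤ (N : ℝ) := Nat.cast_nonneg N
            have h1 : (0:ℝ) ≤ α ^ (N-1) := by positivity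
            have key : α ^ (N-1) * ε ≤ τ ^ (N-1) * a τ :=
              mul_le_mul hpow haτ hε.le (h1.trans hpow)
            have h2 : (N:ℝ) * α ^ (N-1) * ε ≤ (N:ℝ) * τ ^ (N-1) * a τ := by
              rw [mul_assoc, mul_assoc]; exact mul_le_mul_of_nonneg_left key hNn
            exact mul_le_mul_of_nonneg_right h2 h0
        _ ≤ (N : ℝ) * τ ^ (N - 1) * a τ * f (v τ) := by
            have h1 : (0:ℝ) ≤ (N:ℝ) * τ ^ (N-1) * a τ := by
              have := ha0 τ hτ01
              have h0 : (0:ℝ) ≤ τ := hτ01.1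
              positivity
            exact mul_le_mul_of_nonneg_left hfle2 h1
  have hstep2 : ∫ τ in α..β, (N : ℝ) * τ ^ (N - 1) * a τ * f (v τ)
      ≤ ∫ τ in (0:ℝ)..s, (N : ℝ) * τ ^ (N - 1) * a τ * f (v τ) := by
    apply intervalIntegral.integral_mono_interval hα.le hαβ.le hs
    · exact (MeasureTheory.ae_restrict_iff' measurableSet_Ioc).mpr
        (MeasureTheory.ae_of_all _ fun τ hτ => hhnn τ ⟨hτ.1.le, hτ.2.trans hs1⟩)
    · exact hint
  refine le_trans ?_ (hstep1.trans hstep2)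
  rw [intervalIntegral.integral_const, smul_eq_mul]
  ring_nf
  exact le_rfl

theorem stmt12 (N : ℕ) (hN : 1 ≤ N) (a : ℝ → ℝ)
    (ha : ContinuousOn a (Icc 0 1)) (ha0 : ∀ r ∈ Icc (0:ℝ) 1, 0 ≤ a r)
    (hanv : ∀ s t : ℝ, 0 ≤ s → s < t → t ≤ 1 → ∃ r ∈ Ioo s t, a r ≠ 0)
    (f : ℝ → ℝ) (hf : ContinuousOn f (Ici 0))
    (hfnonneg : ∀ s ≥ (0:ℝ), 0 ≤ f s) (hfpos : ∀ s > (0:ℝ), 0 < f s)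
    (ρ : ℝ) (hρ : 0 < ρ) (hlow : ∀ s > (0:ℝ), ρ ≤ f s / s ^ N) :
    ∃ ζ : ℝ, 0 < ζ ∧ ∀ lam : ℝ, ζ < lam →
      ¬ ∃ v : ℝ → ℝ, ContinuousOn v (Icc 0 1) ∧ (∀ r ∈ Icc (0:ℝ) 1, 0 ≤ v r) ∧
        (∃ r ∈ Icc (0:ℝ) 1, v r ≠ 0) ∧
        ∀ r ∈ Icc (0:ℝ) 1, v r = lam * TF N a f v r := by
  classical
  obtain ⟨α, β, ε, hα, hαβ, hβ, hε, haε⟩ :=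
    exists_subinterval a ha ha0 hanv 0 1 le_rfl one_pos le_rfl
  have hNpos : (0:ℝ) < (N:ℝ) := by exact_mod_cast Nat.lt_of_lt_of_le Nat.zero_lt_one hN
  set C : ℝ := (N : ℝ) * α ^ (N - 1) * ε * ρ * (β - α) with hCdef
  have hC : 0 < C := by
    have h1 : (0:ℝ) < β - α := by linarith
    positivity
  have hCpow : 0 < C ^ ((1:ℝ)/N) := Real.rpow_pos_of_pos hC _
  have hX : 0 < (1 - β) * C ^ ((1:ℝ)/N) := by
    have : (0:ℝ) < 1 - β := by linarith
    positivity
  refine ⟨1 / ((1 - β) * C ^ ((1:ℝ)/N)), by positivity, ?_⟩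
  intro lam hlam ⟨v, hv, hv0, ⟨r0, hr0, hvr0⟩, hveq⟩
  have hlam0 : 0 < lam := lt_trans (by positivity) hlam
  set h : ℝ → ℝ := fun τ => (N : ℝ) * τ ^ (N - 1) * a τ * f (v τ) with hhdef
  have hmaps : MapsTo v (Icc 0 1) (Ici 0) := fun x hx => hv0 x hx
  have hhcont : ContinuousOn h (Icc 0 1) :=
    (((continuous_const.mul (continuous_pow _)).continuousOn.mul ha).mul
      (hf.comp hv hmaps))
  have hhnn : ∀ τ ∈ Icc (0:ℝ) 1, 0 ≤ h τ := by
    intro τ hτ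
    have h1 : (0:ℝ) ≤ τ := hτ.1
    have h2 : 0 ≤ a τ := ha0 τ hτ
    have h3 : 0 ≤ f (v τ) := hfnonneg _ (hv0 τ hτ)
    simp only [hhdef]
    positivity
  set g : ℝ → ℝ := fun s => (∫ τ in (0:ℝ)..s, h τ) ^ ((1:ℝ)/N) with hgdef
  have hinn : ∀ s ∈ Icc (0:ℝ) 1, 0 ≤ ∫ τ in (0:ℝ)..s, h τ := fun s hs =>
    intervalIntegral.integral_nonneg hs.1 (fun u hu => hhnn u ⟨hu.1, hu.2.trans hs.2⟩)
  have hgnn : ∀ s ∈ Icc (0:ℝ) 1, 0 ≤ g s := fun s hs => Real.rpow_nonneg (hinn s hs) _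
  have hprim : ContinuousOn (fun s => ∫ τ in (0:ℝ)..s, h τ) (Icc 0 1) := by
    have := intervalIntegral.continuousOn_primitive_interval
      (f := h) (μ := MeasureTheory.volume) (a := 0) (b := 1) ?_
    · rwa [uIcc_of_le zero_le_one] at this
    · rw [uIcc_of_le zero_le_one]
      exact hhcont.integrableOn_Icc
  have hgcont : ContinuousOn g (Icc 0 1) :=
    hprim.rpow_const (fun x _ => Or.inr (by positivity))
  have hgint : ∀ r : ℝ, 0 ≤ r → r ≤ 1 → IntervalIntegrable g MeasureTheory.volume r 1 := by
    intro r hr hr1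
    apply ContinuousOn.intervalIntegrable
    rw [uIcc_of_le hr1]
    exact hgcont.mono (Icc_subset_Icc hr le_rfl)
  have hTF : ∀ r ∈ Icc (0:ℝ) 1, v r = lam * ∫ s in r..1, g s := fun r hr => hveq r hr
  have hmono : ∀ r r' : ℝ, 0 ≤ r → r ≤ r' → r' ≤ 1 → v r' ≤ v r := by
    intro r r' hr hrr' hr'
    rw [hTF r ⟨hr, hrr'.trans hr'⟩, hTF r' ⟨hr.trans hrr', hr'⟩]
    apply mul_le_mul_of_nonneg_left _ hlam0.le
    apply intervalIntegral.integral_mono_interval hrr' hr' le_rfl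
    · exact (MeasureTheory.ae_restrict_iff' measurableSet_Ioc).mpr
        (MeasureTheory.ae_of_all _ fun s hs => hgnn s ⟨hr.trans hs.1.le, hs.2⟩)
    · exact hgint r hr (hrr'.trans hr')
  -- lower bound for v r from a lower bound on the inner integral
  have hvl : ∀ (K r : ℝ), 0 ≤ K → 0 ≤ r → r ≤ 1 →
      (∀ s, r ≤ s → s ≤ 1 → K ≤ ∫ τ in (0:ℝ)..s, h τ) →
      lam * ((1 - r) * K ^ ((1:ℝ)/N)) ≤ v r := by
    intro K r hK hr hr1 hKs
    rw [hTF r ⟨hr, hr1⟩]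
    apply mul_le_mul_of_nonneg_left _ hlam0.le
    have hle : ∫ s in r..1, (K ^ ((1:ℝ)/N)) ≤ ∫ s in r..1, g s := by
      apply intervalIntegral.integral_mono_on hr1 intervalIntegrable_const
        (hgint r hr hr1)
      intro s hs
      exact Real.rpow_le_rpow hK (hKs s hs.1 hs.2) (by positivity)
    simpa [intervalIntegral.integral_const, smul_eq_mul] using hle
  -- positivity of v at β
  have hvβ : 0 < v β := by
    by_contra hneg
    have hvβ0 : v β = 0 := le_antisymm (not_lt.mp hneg) (hv0 β ⟨by linarith, hβ.le⟩)
    have hvr0pos : 0 < v r0 := lt_of_le_of_ne (hv0 r0 hr0) (Ne.symm hvr0)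
    have hr0β : r0 < β := by
      by_contra hcon
      push_neg at hcon
      have := hmono β r0 (by linarith) hcon hr0.2
      rw [hvβ0] at this
      linarith
    -- find t ∈ (r0, β) with v t > 0
    have hev : {x : ℝ | v r0 / 2 < v x} ∈ 𝓝[Icc (0:ℝ) 1] r0 :=
      (hv r0 hr0).eventually (lt_mem_nhds (half_lt_self hvr0pos))
    rw [Metric.mem_nhdsWithin_iff] at hev
    obtain ⟨δ, hδ, hball⟩ := hev
    set t := min (r0 + δ/2) ((r0 + β)/2) with htdef
    have htr0 : r0 < t := lt_min (by linarith) (by linarith)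
    have htβ : t < β := (min_le_right _ _).trans_lt (by linarith)
    have ht1 : t ≤ 1 := htβ.le.trans hβ.le
    have ht0 : 0 < t := lt_of_le_of_lt hr0.1 htr0
    have htmem : t ∈ Icc (0:ℝ) 1 := ⟨ht0.le, ht1⟩
    have hdist : dist t r0 < δ := by
      rw [Real.dist_eq, abs_lt]
      constructor
      · linarith
      · have := min_le_left (r0 + δ/2) ((r0 + β)/2)
        rw [← htdef] at this
        linarith
    have hvt : 0 < v t :=
      (half_pos hvr0pos).trans (hball ⟨Metric.mem_ball.mpr hdist, htmem⟩)
    obtain ⟨α', β', ε', hα', hαβ', hβ't, hε', haε'⟩ :=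
      exists_subinterval a ha ha0 hanv 0 t le_rfl ht0 ht1
    have hvc' : ∀ τ ∈ Icc α' β', v t ≤ v τ := fun τ hτ =>
      hmono τ t (hα'.le.trans hτ.1) (hτ.2.trans hβ't.le) ht1
    have hKs : ∀ s, β ≤ s → s ≤ 1 →
        (N : ℝ) * α' ^ (N - 1) * ε' * ρ * (v t) ^ N * (β' - α')
          ≤ ∫ τ in (0:ℝ)..s, h τ := by
      intro s hs hs1
      exact inner_lower N hN a ha ha0 f hf hfnonneg ρ hρ hlow v hv hv0
        α' β' ε' hα' hαβ' (hβ't.le.trans ht1) hε' haε' (v t) hvt hvc'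
        s ((hβ't.le.trans htβ.le).trans hs) hs1
    have hKpos : 0 < (N : ℝ) * α' ^ (N - 1) * ε' * ρ * (v t) ^ N * (β' - α') := by
      have : (0:ℝ) < β' - α' := by linarith
      positivity
    have := hvl _ β hKpos.le (by linarith) hβ.le hKs
    rw [hvβ0] at this
    have hpos : 0 < lam * ((1 - β) *
        ((N : ℝ) * α' ^ (N - 1) * ε' * ρ * (v t) ^ N * (β' - α')) ^ ((1:ℝ)/N)) := by
      have h1 : (0:ℝ) < 1 - β := by linarith
      have h2 := Real.rpow_pos_of_pos hKpos ((1:ℝ)/N)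
      positivity
    linarith
  -- main estimate
  have hvc : ∀ τ ∈ Icc α β, v β ≤ v τ := fun τ hτ =>
    hmono τ β (hα.le.trans hτ.1) hτ.2 hβ.le
  have hKs : ∀ s, β ≤ s → s ≤ 1 → C * (v β) ^ N ≤ ∫ τ in (0:ℝ)..s, h τ := by
    intro s hs hs1
    have := inner_lower N hN a ha ha0 f hf hfnonneg ρ hρ hlow v hv hv0
      α β ε hα hαβ hβ.le hε haε (v β) hvβ hvc s hs hs1
    calc C * (v β) ^ N
        = (N : ℝ) * α ^ (N - 1) * ε * ρ * (v β) ^ N * (β - α) := by rw [hCdef]; ring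
      _ ≤ _ := this
  have hmain := hvl (C * (v β) ^ N) β (by positivity) (by linarith) hβ.le hKs
  have hNne : (N:ℝ) ≠ 0 := ne_of_gt hNpos
  have heq : (C * v β ^ N) ^ ((1:ℝ)/N) = C ^ ((1:ℝ)/N) * v β := by
    rw [Real.mul_rpow hC.le (by positivity), ← Real.rpow_natCast (v β) N,
      ← Real.rpow_mul hvβ.le, mul_one_div, div_self hNne, Real.rpow_one]
  rw [heq] at hmain
  -- hmain : lam * ((1-β) * (C^{1/N} * v β)) ≤ v β
  have h1 : lam * ((1 - β) * C ^ ((1:ℝ)/N)) * v β ≤ 1 * v β := by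
    rw [one_mul]; calc lam * ((1 - β) * C ^ ((1:ℝ)/N)) * v β
        = lam * ((1 - β) * (C ^ ((1:ℝ)/N) * v β)) := by ring
      _ ≤ v β := hmain
  have h2 : lam * ((1 - β) * C ^ ((1:ℝ)/N)) ≤ 1 := le_of_mul_le_mul_right h1 hvβ
  have h3 : lam ≤ 1 / ((1 - β) * C ^ ((1:ℝ)/N)) := by
    rw [le_div_iff₀ hX]
    linarith
  linarith
end

section
/- Let f : [0,∞) → [0,∞) be continuous with f(s) > 0 for all s > 0, and assume there exists ϱ > 0 such that f(s)/s^N ≤ ϱ for all s > 0. Then there exists η* > 0 such that for every λ ∈ (0, η*) there is no v ∈ C([0,1],[0,∞)) with v ≢ 0 satisfying v = λ T_f v. -/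
open Set Filter Topology intervalIntegral

theorem stmt13 (N : ℕ) (hN : 1 ≤ N) (a : ℝ → ℝ)
    (ha : ContinuousOn a (Icc 0 1)) (ha0 : ∀ r ∈ Icc (0:ℝ) 1, 0 ≤ a r)
    (hanv : ∀ s t : ℝ, 0 ≤ s → s < t → t ≤ 1 → ∃ r ∈ Ioo s t, a r ≠ 0)
    (f : ℝ → ℝ) (hf : ContinuousOn f (Ici 0))
    (hfnonneg : ∀ s ≥ (0:ℝ), 0 ≤ f s) (hfpos : ∀ s > (0:ℝ), 0 < f s)
    (ϱ : ℝ) (hϱ : 0 < ϱ) (hupp : ∀ s > (0:ℝ), f s / s ^ N ≤ ϱ) :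
    ∃ η : ℝ, 0 < η ∧ ∀ lam : ℝ, 0 < lam → lam < η →
      ¬ ∃ v : ℝ → ℝ, ContinuousOn v (Icc 0 1) ∧ (∀ r ∈ Icc (0:ℝ) 1, 0 ≤ v r) ∧
        (∃ r ∈ Icc (0:ℝ) 1, v r ≠ 0) ∧
        ∀ r ∈ Icc (0:ℝ) 1, v r = lam * TF N a f v r := by
  have hNne : (N : ℝ) ≠ 0 := by
    have : 0 < N := by omega
    positivity
  -- `f s ≤ ϱ * s ^ N` for all `s ≥ 0`
  have hf0 : f 0 ≤ 0 := by
    have h1 : Tendsto f (𝓝[>] (0:ℝ)) (𝓝 (f 0)) :=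
      (hf 0 self_mem_Ici).mono_left (nhdsWithin_mono 0 Ioi_subset_Ici_self)
    have h2 : Tendsto (fun s : ℝ => ϱ * s ^ N) (𝓝[>] (0:ℝ)) (𝓝 0) := by
      have hc : Tendsto (fun s : ℝ => ϱ * s ^ N) (𝓝 0) (𝓝 (ϱ * 0 ^ N)) :=
        ((continuous_const.mul (continuous_pow N)).tendsto 0)
      have h0 : (0:ℝ) ^ N = 0 := zero_pow (by omega)
      simpa [h0] using hc.mono_left nhdsWithin_le_nhds
    refine le_of_tendsto_of_tendsto h1 h2 ?_
    filter_upwards [self_mem_nhdsWithin] with s hs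
    have hs' : (0:ℝ) < s := hs
    have h := hupp s hs
    rw [div_le_iff₀ (by positivity)] at h
    simpa [mul_comm] using h
  have hfb : ∀ s : ℝ, 0 ≤ s → f s ≤ ϱ * s ^ N := by
    intro s hs
    rcases hs.lt_or_eq with h | h
    · have h' := hupp s h
      rw [div_le_iff₀ (by positivity)] at h'
      simpa [mul_comm] using h'
    · rw [← h]
      simpa [zero_pow (show N ≠ 0 by omega)] using hf0
  -- bound for `a`
  obtain ⟨x₀, hx₀, hAmax⟩ := isCompact_Icc.exists_isMaxOn
    (nonempty_Icc.mpr (zero_le_one)) ha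
  set A : ℝ := max (a x₀) 0 with hAdef
  have hA0 : 0 ≤ A := le_max_right _ _
  have hAle : ∀ r ∈ Icc (0:ℝ) 1, a r ≤ A := fun r hr =>
    le_trans (hAmax hr) (le_max_left _ _)
  set K : ℝ := ((N : ℝ) * A * ϱ) ^ ((1:ℝ)/N) with hKdef
  have hK0 : 0 ≤ K := Real.rpow_nonneg (by positivity) _
  refine ⟨1/(K+1), by positivity, ?_⟩
  intro lam hlam hlamlt
  rintro ⟨v, hvc, hvnn, ⟨r₀, hr₀, hr₀ne⟩, heq⟩
  -- max of v
  obtain ⟨x, hx, hmax⟩ := isCompact_Icc.exists_isMaxOn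
    (nonempty_Icc.mpr (zero_le_one)) hvc
  set M : ℝ := v x with hMdef
  have hM0 : 0 < M := by
    have h1 : 0 < v r₀ := lt_of_le_of_ne (hvnn r₀ hr₀) (Ne.symm hr₀ne)
    exact lt_of_lt_of_le h1 (hmax hr₀)
  -- continuity of the integrand
  have hgc : ContinuousOn (fun τ => (N:ℝ) * τ ^ (N-1) * a τ * f (v τ)) (Icc 0 1) := by
    exact ((continuousOn_const.mul (continuousOn_pow _)).mul ha).mul
      (hf.comp hvc (fun τ hτ => hvnn τ hτ))
  set B : ℝ := (N:ℝ) * A * ϱ * M ^ N with hBdef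
  have hB0 : 0 ≤ B := by positivity
  -- bound on the inner integral
  have hinner : ∀ s ∈ Icc (0:ℝ) 1,
      (0 ≤ ∫ τ in (0:ℝ)..s, (N:ℝ) * τ ^ (N-1) * a τ * f (v τ)) ∧
      (∫ τ in (0:ℝ)..s, (N:ℝ) * τ ^ (N-1) * a τ * f (v τ)) ≤ B := by
    intro s hs
    have hsub : Icc (0:ℝ) s ⊆ Icc 0 1 := Icc_subset_Icc le_rfl hs.2
    have hint : IntervalIntegrable (fun τ => (N:ℝ) * τ ^ (N-1) * a τ * f (v τ))
        MeasureTheory.volume 0 s := by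
      apply ContinuousOn.intervalIntegrable
      rw [uIcc_of_le hs.1]
      exact hgc.mono hsub
    constructor
    · apply intervalIntegral.integral_nonneg hs.1
      intro τ hτ
      have hτ1 := hsub hτ
      have := hfnonneg (v τ) (hvnn τ hτ1)
      have := ha0 τ hτ1
      have : (0:ℝ) ≤ τ ^ (N-1) := pow_nonneg hτ.1 _
      positivity
    · have hptwise : ∀ τ ∈ Icc (0:ℝ) s,
          (N:ℝ) * τ ^ (N-1) * a τ * f (v τ) ≤ B := by
        intro τ hτ
        have hτ1 := hsub hτ
        have h1 : τ ^ (N-1) ≤ 1 := pow_le_one₀ hτ.1 hτ1.2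
        have h2 : a τ ≤ A := hAle τ hτ1
        have h3 : 0 ≤ a τ := ha0 τ hτ1
        have h4 : f (v τ) ≤ ϱ * M ^ N := by
          refine le_trans (hfb (v τ) (hvnn τ hτ1)) ?_
          have : v τ ^ N ≤ M ^ N := pow_le_pow_left₀ (hvnn τ hτ1) (hmax hτ1) N
          nlinarith
        have h5 : 0 ≤ f (v τ) := hfnonneg (v τ) (hvnn τ hτ1)
        have h6 : (0:ℝ) ≤ τ ^ (N-1) := pow_nonneg hτ.1 _
        calc (N:ℝ) * τ ^ (N-1) * a τ * f (v τ)
            ≤ (N:ℝ) * 1 * A * (ϱ * M ^ N) := by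
              apply mul_le_mul _ h4 h5 (by positivity)
              apply mul_le_mul _ h2 h3 (by positivity)
              exact mul_le_mul le_rfl h1 h6 (by positivity)
          _ = B := by rw [hBdef]; ring
      calc (∫ τ in (0:ℝ)..s, (N:ℝ) * τ ^ (N-1) * a τ * f (v τ))
          ≤ ∫ _ in (0:ℝ)..s, B :=
            intervalIntegral.integral_mono_on hs.1 hint intervalIntegrable_const hptwise
        _ = s * B := by rw [intervalIntegral.integral_const, smul_eq_mul, sub_zero]
        _ ≤ 1 * B := by
            apply mul_le_mul_of_nonneg_right hs.2 hB0
        _ = B := one_mul B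
  -- identity `B ^ (1/N) = K * M`
  have hBK : B ^ ((1:ℝ)/N) = K * M := by
    rw [hBdef, Real.mul_rpow (by positivity) (by positivity), hKdef]
    congr 1
    rw [← Real.rpow_natCast M N, ← Real.rpow_mul hM0.le, mul_one_div,
      div_self hNne, Real.rpow_one]
  -- bound on TF at x
  have hTF : |TF N a f v x| ≤ K * M * |1 - x| := by
    rw [TF]
    have h := intervalIntegral.norm_integral_le_of_norm_le_const (a := x) (b := 1)
      (C := K * M)
      (f := fun s => (∫ τ in (0:ℝ)..s, (N:ℝ) * τ ^ (N-1) * a τ * f (v τ)) ^ ((1:ℝ)/N)) ?_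
    · simpa using h
    intro s hs
    rw [uIoc_of_le hx.2] at hs
    have hs1 : s ∈ Icc (0:ℝ) 1 := ⟨le_trans hx.1 hs.1.le, hs.2⟩
    obtain ⟨hnn, hle⟩ := hinner s hs1
    rw [Real.norm_eq_abs, abs_of_nonneg (Real.rpow_nonneg hnn _)]
    calc (∫ τ in (0:ℝ)..s, (N:ℝ) * τ ^ (N-1) * a τ * f (v τ)) ^ ((1:ℝ)/N)
        ≤ B ^ ((1:ℝ)/N) := Real.rpow_le_rpow hnn hle (by positivity)
      _ = K * M := hBK
  -- conclude
  have hMle : M ≤ lam * (K * M) := by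
    have h1 : M = lam * TF N a f v x := heq x hx
    have h2 : TF N a f v x ≤ |TF N a f v x| := le_abs_self _
    have h3 : K * M * |1 - x| ≤ K * M * 1 := by
      apply mul_le_mul_of_nonneg_left _ (by positivity)
      rw [abs_of_nonneg (by linarith [hx.2])]
      linarith [hx.1]
    calc M = lam * TF N a f v x := h1
      _ ≤ lam * (K * M) := by nlinarith
  rw [lt_div_iff₀ (by positivity)] at hlamlt
  nlinarith
end
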